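/- arXiv:2210.04169 — 11 statements merged into one kernel-verified Lean document; each statement's English description precedes it below -/
import Mathlib

section
/- Positive invariance (Proposition 2): Let x : [0,∞) → ℝⁿ be a solution of the controlled SIS system such that x_i(0) ∈ [0, 1/c_i] for every i ∈ {1,…,n}. Then x_i(t) ∈ [0, 1/c_i] for every i ∈ {1,…,n} and every t ≥ 0. -/
open Matrix Filter Topology

/-- Spectral abscissa: the maximum of the real parts of the complex eigenvalues. -/
noncomputable def specAbs {n : ℕ} (M : Matrix (Fin n) (Fin n) ℝ) : ℝ :=
  sSup (Complex.re '' spectrum ℂ (M.map (Complex.ofReal ·)))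

/-- Irreducibility of a matrix. -/
def MatIrreducible {n : ℕ} (A : Matrix (Fin n) (Fin n) ℝ) : Prop :=
  ∀ S : Set (Fin n), S.Nonempty → S ≠ Set.univ → ∃ i ∈ S, ∃ j ∉ S, 0 < A i j

/-- The controlled SIS vector field. -/
def sisF {n : ℕ} (A : Matrix (Fin n) (Fin n) ℝ) (β γ c : Fin n → ℝ)
    (x : Fin n → ℝ) (i : Fin n) : ℝ :=
  β i * (1 - c i * x i) * (1 - x i) * (∑ j, A i j * x j) - γ i * x i

/-- A solution of the controlled SIS system. -/
def IsSol {n : ℕ} (A : Matrix (Fin n) (Fin n) ℝ) (β γ c : Fin n → ℝ)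
    (x : ℝ → Fin n → ℝ) : Prop :=
  ∀ t : ℝ, 0 ≤ t → HasDerivWithinAt x (sisF A β γ c (x t)) (Set.Ici 0) t

/-- Auxiliary branch functions for the barrier. -/
noncomputable def branchVal {n : ℕ} (c : Fin n → ℝ) (x : ℝ → Fin n → ℝ) :
    Option (Fin n × Bool) → ℝ → ℝ
  | none, _ => 0
  | some (j, false), t => -(x t j)
  | some (j, true), t => x t j - 1 / c j

theorem stmt0 {n : ℕ} (hn : 1 ≤ n) (A : Matrix (Fin n) (Fin n) ℝ)
    (hA : ∀ i j, 0 ≤ A i j) (β γ c : Fin n → ℝ)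
    (hβ : ∀ i, 0 < β i) (hγ : ∀ i, 0 ≤ γ i) (hc : ∀ i, 1 < c i)
    (x : ℝ → Fin n → ℝ) (hx : IsSol A β γ c x)
    (h0 : ∀ i, x 0 i ∈ Set.Icc 0 (1 / c i)) :
    ∀ t : ℝ, 0 ≤ t → ∀ i, x t i ∈ Set.Icc 0 (1 / c i) := by
  classical
  intro T hT
  -- the barrier function
  have hne : (Finset.univ : Finset (Option (Fin n × Bool))).Nonempty :=
    ⟨none, Finset.mem_univ _⟩
  set g : ℝ → ℝ := fun t => Finset.univ.sup' hne (fun b => branchVal c x b t) with hgdef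
  have hub : ∀ b t, branchVal c x b t ≤ g t := fun b t =>
    Finset.le_sup' (f := fun b => branchVal c x b t) (Finset.mem_univ b)
  have hg0 : ∀ t, 0 ≤ g t := fun t => hub none t
  have hgeF : ∀ t, ∀ k, -(g t) ≤ x t k := by
    intro t k
    have := hub (some (k, false)) t
    simp only [branchVal] at this
    linarith
  -- coordinatewise continuity on [0, T]
  have hcontx : ContinuousOn x (Set.Icc 0 T) := by
    intro s hs
    exact ((hx s hs.1).continuousWithinAt).mono (fun z hz => hz.1)
  have hcontxi : ∀ i, ContinuousOn (fun t => x t i) (Set.Icc 0 T) := by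
    intro i
    exact (continuous_apply i).comp_continuousOn hcontx
  -- bound on the solution on [0, T]
  obtain ⟨C, hC⟩ := (isCompact_Icc (a := (0:ℝ)) (b := T)).exists_bound_of_continuousOn hcontx
  set M : ℝ := max C 1 with hMdef
  have hM1 : (1:ℝ) ≤ M := le_max_right _ _
  have hM0 : (0:ℝ) ≤ M := by linarith
  have hxM : ∀ s ∈ Set.Icc (0:ℝ) T, ∀ j, |x s j| ≤ M := by
    intro s hs j
    calc |x s j| = ‖x s j‖ := rfl
      _ ≤ ‖x s‖ := norm_le_pi_norm (x s) j
      _ ≤ C := hC s hs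
      _ ≤ M := le_max_left _ _
  -- bound on g on [0, T]
  have hgM : ∀ s ∈ Set.Icc (0:ℝ) T, g s ≤ M + 1 := by
    intro s hs
    apply Finset.sup'_le
    rintro (_ | ⟨j, _ | _⟩) -
    · simp only [branchVal]; linarith
    · simp only [branchVal]
      have := abs_le.1 (hxM s hs j); linarith [this.1]
    · simp only [branchVal]
      have hcj : 0 < c j := lt_trans one_pos (hc j)
      have h2 : 0 < 1 / c j := by positivity
      linarith [(abs_le.1 (hxM s hs j)).2]
  -- the Gronwall constant
  have hSA : ∀ j, (0:ℝ) ≤ ∑ k, A j k := fun j => Finset.sum_nonneg fun k _ => hA j k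
  have ht1 : ∀ j : Fin n,
      0 ≤ β j * (1 + c j * (M + 1)) * (1 + (M + 1)) * (∑ k, A j k) := by
    intro j
    have hb := (hβ j).le
    have hcj : (0:ℝ) ≤ c j := le_of_lt (lt_trans one_pos (hc j))
    have h1 : (0:ℝ) ≤ 1 + c j * (M + 1) := by nlinarith
    have h2 : (0:ℝ) ≤ 1 + (M + 1) := by linarith
    exact mul_nonneg (mul_nonneg (mul_nonneg hb h1) h2) (hSA j)
  have ht2 : ∀ j : Fin n, 0 ≤ β j * c j * ((1 + M) * (M * (∑ k, A j k))) := by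
    intro j
    have hb := (hβ j).le
    have hcj : (0:ℝ) ≤ c j := le_of_lt (lt_trans one_pos (hc j))
    exact mul_nonneg (mul_nonneg hb hcj)
      (mul_nonneg (by linarith) (mul_nonneg hM0 (hSA j)))
  set K : ℝ := 1 + ∑ j, (β j * (1 + c j * (M + 1)) * (1 + (M + 1)) * (∑ k, A j k) +
      β j * c j * ((1 + M) * (M * (∑ k, A j k)))) with hKdef
  have hsum0 : (0:ℝ) ≤ ∑ j, (β j * (1 + c j * (M + 1)) * (1 + (M + 1)) * (∑ k, A j k) +
      β j * c j * ((1 + M) * (M * (∑ k, A j k)))) :=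
    Finset.sum_nonneg fun j _ => add_nonneg (ht1 j) (ht2 j)
  have hK0 : (0:ℝ) ≤ K := by rw [hKdef]; linarith
  have hsingle : ∀ j : Fin n,
      β j * (1 + c j * (M + 1)) * (1 + (M + 1)) * (∑ k, A j k) +
        β j * c j * ((1 + M) * (M * (∑ k, A j k))) ≤
      ∑ j, (β j * (1 + c j * (M + 1)) * (1 + (M + 1)) * (∑ k, A j k) +
        β j * c j * ((1 + M) * (M * (∑ k, A j k)))) := fun j =>
    Finset.single_le_sum (fun i _ => add_nonneg (ht1 i) (ht2 i)) (Finset.mem_univ j)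
  have hK1 : ∀ j : Fin n,
      β j * (1 + c j * (M + 1)) * (1 + (M + 1)) * (∑ k, A j k) ≤ K := by
    intro j
    have h := hsingle j
    have h2 := ht2 j
    rw [hKdef]; linarith
  have hK2 : ∀ j : Fin n, β j * c j * ((1 + M) * (M * (∑ k, A j k))) ≤ K := by
    intro j
    have h := hsingle j
    have h2 := ht1 j
    rw [hKdef]; linarith
  -- the key vector field inequalities on the boundary branches
  have key_a : ∀ s ∈ Set.Icc (0:ℝ) T, ∀ j, x s j = -(g s) →
      -(sisF A β γ c (x s) j) ≤ K * g s := by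
    intro s hs j hxj
    have hg0s := hg0 s
    have hgMs := hgM s hs
    have hcj : (0:ℝ) ≤ c j := le_of_lt (lt_trans one_pos (hc j))
    have hS : -(g s * ∑ k, A j k) ≤ ∑ k, A j k * x s k := by
      have h1 : ∑ k, A j k * (-(g s)) ≤ ∑ k, A j k * x s k :=
        Finset.sum_le_sum fun k _ => mul_le_mul_of_nonneg_left (hgeF s k) (hA j k)
      have h2 : ∑ k, A j k * (-(g s)) = -(g s * ∑ k, A j k) := by
        rw [← Finset.sum_mul]; ring
      linarith
    have f1 : (0:ℝ) ≤ 1 + g s := by linarith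
    have f2 : (0:ℝ) ≤ 1 + c j * g s := by nlinarith
    have f3 : (0:ℝ) ≤ 1 + c j * (M + 1) := by nlinarith
    have hcoef0 : 0 ≤ β j * (1 + c j * g s) * (1 + g s) :=
      mul_nonneg (mul_nonneg (hβ j).le f2) f1
    have h1 : β j * (1 + c j * g s) * (1 + g s) * (-(∑ k, A j k * x s k)) ≤
        β j * (1 + c j * g s) * (1 + g s) * (g s * ∑ k, A j k) :=
      mul_le_mul_of_nonneg_left (by linarith) hcoef0
    have ha1 : 1 + c j * g s ≤ 1 + c j * (M + 1) := by nlinarith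
    have hcoef2 : β j * (1 + c j * g s) * (1 + g s) ≤
        β j * (1 + c j * (M + 1)) * (1 + (M + 1)) := by
      calc β j * (1 + c j * g s) * (1 + g s)
          ≤ β j * (1 + c j * (M + 1)) * (1 + g s) :=
            mul_le_mul_of_nonneg_right (mul_le_mul_of_nonneg_left ha1 (hβ j).le) f1
        _ ≤ β j * (1 + c j * (M + 1)) * (1 + (M + 1)) :=
            mul_le_mul_of_nonneg_left (by linarith) (mul_nonneg (hβ j).le f3)
    have h2 : β j * (1 + c j * g s) * (1 + g s) * (g s * ∑ k, A j k) ≤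
        β j * (1 + c j * (M + 1)) * (1 + (M + 1)) * (g s * ∑ k, A j k) :=
      mul_le_mul_of_nonneg_right hcoef2 (mul_nonneg hg0s (hSA j))
    have h3 : β j * (1 + c j * (M + 1)) * (1 + (M + 1)) * (g s * ∑ k, A j k) ≤ K * g s := by
      calc β j * (1 + c j * (M + 1)) * (1 + (M + 1)) * (g s * ∑ k, A j k)
          = (β j * (1 + c j * (M + 1)) * (1 + (M + 1)) * (∑ k, A j k)) * g s := by ring
        _ ≤ K * g s := mul_le_mul_of_nonneg_right (hK1 j) hg0s
    have hγ0 : 0 ≤ γ j * g s := mul_nonneg (hγ j) hg0s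
    simp only [sisF]
    rw [hxj]
    have e : -(β j * (1 - c j * -(g s)) * (1 - -(g s)) * (∑ k, A j k * x s k) -
        γ j * -(g s)) =
        β j * (1 + c j * g s) * (1 + g s) * (-(∑ k, A j k * x s k)) - γ j * g s := by
      ring
    rw [e]
    linarith
  have key_b : ∀ s ∈ Set.Icc (0:ℝ) T, ∀ j, x s j = 1 / c j + g s →
      sisF A β γ c (x s) j ≤ K * g s := by
    intro s hs j hxj
    have hg0s := hg0 s
    have hcj : (0:ℝ) < c j := lt_trans one_pos (hc j)
    have habsS : |∑ k, A j k * x s k| ≤ M * ∑ k, A j k := by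
      calc |∑ k, A j k * x s k| ≤ ∑ k, |A j k * x s k| :=
            Finset.abs_sum_le_sum_abs _ _
        _ ≤ ∑ k, A j k * M := Finset.sum_le_sum fun k _ => by
            rw [abs_mul, abs_of_nonneg (hA j k)]
            exact mul_le_mul_of_nonneg_left (hxM s hs k) (hA j k)
        _ = M * ∑ k, A j k := by rw [← Finset.sum_mul, mul_comm]
    have h1cx : 1 - c j * x s j = -(c j * g s) := by
      rw [hxj]; field_simp; ring
    have hxj0 : 0 ≤ x s j := by
      rw [hxj]
      have : 0 < 1 / c j := by positivity
      linarith
    have hγ0 : 0 ≤ γ j * x s j := mul_nonneg (hγ j) hxj0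
    have habs1 : |1 - x s j| ≤ 1 + M := by
      have h := abs_le.1 (hxM s hs j)
      rw [abs_le]
      constructor
      · linarith [h.2]
      · linarith [h.1]
    have hmain : β j * (-(c j * g s)) * ((1 - x s j) * (∑ k, A j k * x s k)) ≤
        β j * (c j * g s) * ((1 + M) * (M * ∑ k, A j k)) := by
      have h0 : -((1 - x s j) * (∑ k, A j k * x s k)) ≤ (1 + M) * (M * ∑ k, A j k) := by
        calc -((1 - x s j) * (∑ k, A j k * x s k))
            ≤ |(1 - x s j) * (∑ k, A j k * x s k)| := neg_le_abs _
          _ = |1 - x s j| * |∑ k, A j k * x s k| := abs_mul _ _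
          _ ≤ (1 + M) * (M * ∑ k, A j k) :=
              mul_le_mul habs1 habsS (abs_nonneg _) (by linarith)
      have hcg : 0 ≤ β j * (c j * g s) :=
        mul_nonneg (hβ j).le (mul_nonneg hcj.le hg0s)
      calc β j * (-(c j * g s)) * ((1 - x s j) * (∑ k, A j k * x s k))
          = β j * (c j * g s) * (-((1 - x s j) * (∑ k, A j k * x s k))) := by ring
        _ ≤ β j * (c j * g s) * ((1 + M) * (M * ∑ k, A j k)) :=
            mul_le_mul_of_nonneg_left h0 hcg
    have h3 : β j * (c j * g s) * ((1 + M) * (M * ∑ k, A j k)) ≤ K * g s := by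
      calc β j * (c j * g s) * ((1 + M) * (M * ∑ k, A j k))
          = (β j * c j * ((1 + M) * (M * (∑ k, A j k)))) * g s := by ring
        _ ≤ K * g s := mul_le_mul_of_nonneg_right (hK2 j) hg0s
    simp only [sisF]
    rw [h1cx]
    have e : β j * -(c j * g s) * (1 - x s j) * (∑ k, A j k * x s k) - γ j * x s j =
        β j * (-(c j * g s)) * ((1 - x s j) * (∑ k, A j k * x s k)) - γ j * x s j := by
      ring
    rw [e]
    linarith
  -- continuity of g on [0, T]
  have hcontg : ContinuousOn g (Set.Icc 0 T) := by
    intro s hs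
    apply ContinuousWithinAt.finset_sup'_apply hne
    rintro (_ | ⟨j, _ | _⟩) -
    · exact continuousWithinAt_const
    · exact (hcontxi j s hs).neg
    · exact (hcontxi j s hs).sub continuousWithinAt_const
  -- Gronwall
  have main : ∀ s ∈ Set.Icc (0:ℝ) T, g s ≤ gronwallBound 0 K 0 (s - 0) := by
    apply le_gronwallBound_of_liminf_deriv_right_le (f' := fun s => K * g s) hcontg
    · -- the liminf slope estimate
      intro t0 ht0 r hr
      have hr0 : 0 < r := lt_of_le_of_lt (mul_nonneg hK0 (hg0 t0)) hr
      have ht0T : t0 ∈ Set.Icc (0:ℝ) T := ⟨ht0.1, ht0.2.le⟩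
      have hIoi : Set.Ioi t0 ⊆ Set.Ici (0:ℝ) := fun z hz => le_trans ht0.1 (le_of_lt hz)
      have hderiv : ∀ i, HasDerivWithinAt (fun t => x t i) (sisF A β γ c (x t0) i)
          (Set.Ici 0) t0 := fun i => hasDerivWithinAt_pi.1 (hx t0 ht0.1) i
      have hb : ∀ b : Option (Fin n × Bool),
          ∀ᶠ z in 𝓝[>] t0, branchVal c x b z < g t0 + r * (z - t0) := by
        intro b
        by_cases hact : branchVal c x b t0 = g t0
        · -- active branch: use the derivative bound
          obtain ⟨d, hd, hdr⟩ : ∃ d, HasDerivWithinAt (fun t => branchVal c x b t) d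
              (Set.Ici 0) t0 ∧ d < r := by
            obtain (_ | ⟨j, _ | _⟩) := b
            · exact ⟨0, hasDerivWithinAt_const _ _ 0, hr0⟩
            · refine ⟨-(sisF A β γ c (x t0) j), (hderiv j).neg, ?_⟩
              have hxj : x t0 j = -(g t0) := by
                simp only [branchVal] at hact
                linarith
              exact lt_of_le_of_lt (key_a t0 ht0T j hxj) hr
            · refine ⟨sisF A β γ c (x t0) j, (hderiv j).sub_const _, ?_⟩
              have hxj : x t0 j = 1 / c j + g t0 := by
                simp only [branchVal] at hact
                linarith
              exact lt_of_le_of_lt (key_b t0 ht0T j hxj) hr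
          have hd' : HasDerivWithinAt (fun t => branchVal c x b t) d (Set.Ioi t0) t0 :=
            hd.mono hIoi
          rw [hasDerivWithinAt_iff_tendsto_slope,
            Set.diff_singleton_eq_self (Set.notMem_Ioi.2 le_rfl)] at hd'
          have hev : ∀ᶠ z in 𝓝[>] t0, slope (fun t => branchVal c x b t) t0 z < r :=
            hd'.eventually_lt_const hdr
          filter_upwards [hev, self_mem_nhdsWithin] with z hz hz'
          have hzt : (0:ℝ) < z - t0 := sub_pos.2 hz'
          rw [slope_def_field] at hz
          have h2 := (div_lt_iff₀ hzt).1 hz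
          rw [← hact]
          linarith
        · -- inactive branch: continuity
          have hlt : branchVal c x b t0 < g t0 := lt_of_le_of_ne (hub b t0) hact
          have hcb : ContinuousWithinAt (fun t => branchVal c x b t) (Set.Ici 0) t0 := by
            obtain (_ | ⟨j, _ | _⟩) := b
            · exact continuousWithinAt_const
            · exact ((continuous_apply j).continuousAt.comp_continuousWithinAt
                (hx t0 ht0.1).continuousWithinAt).neg
            · exact ((continuous_apply j).continuousAt.comp_continuousWithinAt
                (hx t0 ht0.1).continuousWithinAt).sub continuousWithinAt_const
          have htend : Tendsto (fun t => branchVal c x b t) (𝓝[>] t0)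
              (𝓝 (branchVal c x b t0)) :=
            hcb.tendsto.mono_left (nhdsWithin_mono t0 hIoi)
          have hev : ∀ᶠ z in 𝓝[>] t0, branchVal c x b z < g t0 :=
            htend.eventually_lt_const hlt
          filter_upwards [hev, self_mem_nhdsWithin] with z hz hz'
          have hzt : (0:ℝ) < z - t0 := sub_pos.2 hz'
          have := mul_pos hr0 hzt
          linarith
      have hall : ∀ᶠ z in 𝓝[>] t0, ∀ b, branchVal c x b z < g t0 + r * (z - t0) :=
        eventually_all.2 hb
      apply Filter.Eventually.frequently
      filter_upwards [hall, self_mem_nhdsWithin] with z hz hz'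
      have hzt : (0:ℝ) < z - t0 := sub_pos.2 hz'
      have hgz : g z < g t0 + r * (z - t0) :=
        (Finset.sup'_lt_iff hne).2 fun b _ => hz b
      rw [inv_mul_eq_div, div_lt_iff₀ hzt]
      linarith
    · -- initial condition
      apply Finset.sup'_le
      rintro (_ | ⟨j, _ | _⟩) -
      · simp [branchVal]
      · simp only [branchVal]
        linarith [(h0 j).1]
      · simp only [branchVal]
        linarith [(h0 j).2]
    · intro s hs
      simp
  -- conclude
  have hgT : g T ≤ 0 := by
    have := main T ⟨hT, le_rfl⟩
    rwa [sub_zero, gronwallBound_ε0_δ0] at this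
  intro i
  have h1 := hub (some (i, false)) T
  have h2 := hub (some (i, true)) T
  simp only [branchVal] at h1 h2
  exact ⟨by linarith, by linarith⟩
end

section
/- Existence and uniqueness of the endemic equilibrium (Proposition 4, first part): Assume A is irreducible and s(BA − Γ) > 0. Then there exists a unique vector x̄ ∈ ℝⁿ with 0 < x̄_i ≤ 1/c_i for every i ∈ {1,…,n} such that β_i (1 − c_i x̄_i)(1 − x̄_i) ∑_{j=1}^n A_{ij} x̄_j = γ_i x̄_i for every i ∈ {1,…,n}. -/
open Matrix Filter Topology

/-!
Shifting `B A - Γ` by a large multiple of the identity gives a nonnegative irreducible matrix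
with positive diagonal. Applied often enough to the modulus of an eigenvector whose eigenvalue
has positive real part, it produces a positive vector `v` with `Γ v < B A v`, and a small
multiple of `v` is a subsolution of the equilibrium equations. Once `∑ j, A i j * x j > 0` is
fixed, the `i`-th equation has a root in `(0, 1 / c i]` that increases with this sum, so sending
`x` to these roots is a monotone self-map of the box between the subsolution and `1 / c`;
Knaster–Tarski gives an equilibrium. Uniqueness holds because `(1 - c t) (1 - t)` is strictly
decreasing on `[0, 1 / c]`.
-/

section Scalar

variable {β γ c y : ℝ}

lemma strictAntiOn_one_sub_mul_one_sub (hc : 1 < c) :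
    StrictAntiOn (fun t : ℝ => (1 - c * t) * (1 - t)) (Set.Icc 0 (1 / c)) := by
  intro s hs t ht hst
  have hct : c * t ≤ 1 := by
    have := (le_div_iff₀ (by linarith : (0 : ℝ) < c)).1 ht.2; linarith
  simp only
  nlinarith [mul_pos (sub_pos.2 hst) (show 0 < c + 1 - c * (t + s) by nlinarith [hs.1])]

lemma one_sub_mul_one_sub_nonneg (hc : 1 < c) {t : ℝ} (ht : t ≤ 1 / c) :
    0 ≤ (1 - c * t) * (1 - t) := by
  have hct : c * t ≤ 1 := by
    have := (le_div_iff₀ (by linarith : (0 : ℝ) < c)).1 ht; linarith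
  nlinarith

lemma strictAntiOn_sis_residual (hβ : 0 < β) (hγ : 0 ≤ γ) (hc : 1 < c) (hy : 0 < y) :
    StrictAntiOn (fun t => β * (1 - c * t) * (1 - t) * y - γ * t) (Set.Icc 0 (1 / c)) := by
  intro s hs t ht hst
  have := strictAntiOn_one_sub_mul_one_sub hc hs ht hst
  nlinarith [mul_pos hβ hy, mul_le_mul_of_nonneg_left hst.le hγ]

lemma exists_sis_root (hβ : 0 < β) (hγ : 0 ≤ γ) (hc : 1 < c) (hy : 0 < y) :
    ∃ t ∈ Set.Ioc 0 (1 / c), β * (1 - c * t) * (1 - t) * y = γ * t := by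
  have hc0 : 0 < c := by linarith
  obtain ⟨t, ht, hroot⟩ := intermediate_value_Icc'
    (f := fun t => β * (1 - c * t) * (1 - t) * y - γ * t)
    (by positivity : (0 : ℝ) ≤ 1 / c) (by fun_prop) (show (0 : ℝ) ∈ Set.Icc _ _ by
      constructor
      · field_simp; nlinarith
      · nlinarith [mul_pos hβ hy])
  refine ⟨t, ⟨lt_of_le_of_ne ht.1 ?_, ht.2⟩, sub_eq_zero.1 hroot⟩
  rintro rfl
  nlinarith [mul_pos hβ hy]

lemma le_sis_root (hβ : 0 < β) (hγ : 0 ≤ γ) (hc : 1 < c) (hy : 0 < y) {s t : ℝ}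
    (hs : s ∈ Set.Icc 0 (1 / c)) (ht : t ∈ Set.Icc 0 (1 / c))
    (hsub : γ * s ≤ β * (1 - c * s) * (1 - s) * y)
    (hroot : β * (1 - c * t) * (1 - t) * y = γ * t) : s ≤ t :=
  (strictAntiOn_sis_residual hβ hγ hc hy).le_iff_ge ht hs |>.1 (by linarith)

lemma sis_root_mono (hβ : 0 < β) (hγ : 0 ≤ γ) (hc : 1 < c) (hy : 0 < y) {y' t t' : ℝ}
    (hyy' : y ≤ y') (ht : t ∈ Set.Ioc 0 (1 / c)) (ht' : t' ∈ Set.Ioc 0 (1 / c))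
    (hroot : β * (1 - c * t) * (1 - t) * y = γ * t)
    (hroot' : β * (1 - c * t') * (1 - t') * y' = γ * t') : t ≤ t' := by
  refine le_sis_root hβ hγ hc (hy.trans_le hyy') (Set.Ioc_subset_Icc_self ht)
    (Set.Ioc_subset_Icc_self ht') ?_ hroot'
  have hK : 0 ≤ β * (1 - c * t) * (1 - t) := by
    rw [mul_assoc]; exact mul_nonneg hβ.le (one_sub_mul_one_sub_nonneg hc ht.2)
  exact hroot ▸ mul_le_mul_of_nonneg_left hyy' hK

end Scalar

section Nonneg

variable {ι : Type*} [Fintype ι] {P : Matrix ι ι ℝ}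

lemma mulVec_mono_of_nonneg (hP : ∀ i j, 0 ≤ P i j) {u v : ι → ℝ} (huv : u ≤ v) :
    P *ᵥ u ≤ P *ᵥ v :=
  fun i => dotProduct_le_dotProduct_of_nonneg_left huv (hP i)

lemma mul_le_mulVec_of_nonneg (hP : ∀ i j, 0 ≤ P i j) {u : ι → ℝ} (hu : 0 ≤ u)
    (i j : ι) : P i j * u j ≤ (P *ᵥ u) i :=
  Finset.single_le_sum (f := fun j => P i j * u j) (fun k _ => mul_nonneg (hP i k) (hu k))
    (Finset.mem_univ j)

lemma exists_pos_of_mulVec_pos {u : ι → ℝ} (hu : 0 ≤ u) {i : ι} (h : 0 < (P *ᵥ u) i) :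
    ∃ j, 0 < P i j := by
  by_contra! hle
  exact h.not_ge <| Finset.sum_nonpos fun j _ => mul_nonpos_of_nonpos_of_nonneg (hle j) (hu j)

lemma mulVec_pos_of_exists_pos (hP : ∀ i j, 0 ≤ P i j) (hrow : ∀ i, ∃ j, 0 < P i j)
    {u : ι → ℝ} (hu : ∀ j, 0 < u j) (i : ι) : 0 < (P *ᵥ u) i := by
  obtain ⟨j, hj⟩ := hrow i
  exact (mul_pos hj (hu j)).trans_le (mul_le_mulVec_of_nonneg hP (fun k => (hu k).le) i j)

lemma norm_mul_norm_le_mulVec_norm (hP : ∀ i j, 0 ≤ P i j) {μ : ℂ} {w : ι → ℂ}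
    (hw : P.map (Complex.ofReal ·) *ᵥ w = μ • w) (i : ι) :
    ‖μ‖ * ‖w i‖ ≤ (P *ᵥ fun j => ‖w j‖) i :=
  calc ‖μ‖ * ‖w i‖ = ‖∑ j, (P i j : ℂ) * w j‖ := by
        rw [← norm_mul, ← smul_eq_mul, ← Pi.smul_apply, ← hw]; rfl
    _ ≤ ∑ j, ‖(P i j : ℂ) * w j‖ := norm_sum_le _ _
    _ = (P *ᵥ fun j => ‖w j‖) i := by
        simp [mulVec, dotProduct, abs_of_nonneg (hP i _)]

lemma smul_le_mulVec_pow_mulVec [DecidableEq ι] (hP : ∀ i j, 0 ≤ P i j) {r : ℝ}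
    {u : ι → ℝ} (h : r • u ≤ P *ᵥ u) (k : ℕ) : r • (P ^ k *ᵥ u) ≤ P *ᵥ (P ^ k *ᵥ u) := by
  induction k with
  | zero => simpa using h
  | succ k ih =>
    rw [pow_succ', ← mulVec_mulVec, ← mulVec_smul]
    exact mulVec_mono_of_nonneg hP ih

end Nonneg

lemma exists_fixedPoint_of_monotone_Icc {α : Type*} [ConditionallyCompleteLattice α] {a b : α}
    (hab : a ≤ b) (f : Set.Icc a b → α) (hf : Monotone f)
    (hmaps : ∀ x, f x ∈ Set.Icc a b) :
    ∃ x, f x = x := by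
  have : Fact (a ≤ b) := ⟨hab⟩
  let g : Set.Icc a b →o Set.Icc a b := ⟨fun x => ⟨f x, hmaps x⟩, fun _ _ h => hf h⟩
  exact ⟨g.lfp, congrArg Subtype.val g.map_lfp⟩

section Irreducible

variable {n : ℕ}

lemma exists_eigenvector_of_specAbs_pos {M : Matrix (Fin n) (Fin n) ℝ} (hs : 0 < specAbs M) :
    ∃ μ : ℂ, 0 < μ.re ∧ ∃ w ≠ 0, M.map (Complex.ofReal ·) *ᵥ w = μ • w := by
  set σ := spectrum ℂ (M.map (Complex.ofReal ·))
  have hne : (Complex.re '' σ).Nonempty := by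
    by_contra h
    simp [specAbs, σ, Set.not_nonempty_iff_eq_empty.1 h] at hs
  obtain ⟨μ, hμ, hre⟩ := hne.csSup_mem ((Matrix.finite_spectrum _).image _)
  have hμ' : Module.End.HasEigenvalue (M.map (Complex.ofReal ·)).toLin' μ :=
    Module.End.hasEigenvalue_iff_mem_spectrum.2 (by rwa [Matrix.spectrum_toLin'])
  obtain ⟨w, hw⟩ := hμ'.exists_hasEigenvector
  exact ⟨μ, hre ▸ hs, w, hw.2, by simpa using hw.apply_eq_smul⟩

variable {P : Matrix (Fin n) (Fin n) ℝ}

/-- With a positive diagonal, `P` keeps the support of `u`; irreducibility makes it grow. -/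
lemma card_zeros_mulVec_lt (hP : ∀ i j, 0 ≤ P i j) (hdiag : ∀ i, 0 < P i i)
    (hirr : MatIrreducible P) {u : Fin n → ℝ} (hu : 0 ≤ u) (hu0 : u ≠ 0)
    (hupos : ¬ ∀ i, 0 < u i) :
    (Finset.univ.filter fun i => (P *ᵥ u) i = 0).card
      < (Finset.univ.filter fun i => u i = 0).card := by
  apply Finset.card_lt_card
  rw [Finset.ssubset_iff_of_subset]
  · obtain ⟨i₀, hi₀⟩ : ∃ i, u i ≤ 0 := by simpa using hupos
    obtain ⟨i, hi, j, hj, hPij⟩ := hirr {i | u i = 0} ⟨i₀, le_antisymm hi₀ (hu i₀)⟩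
      (fun h => hu0 (funext fun i => (h ▸ Set.mem_univ i : i ∈ {i | u i = 0})))
    refine ⟨i, by simpa using hi, ?_⟩
    have := (mul_pos hPij (lt_of_le_of_ne (hu j) (Ne.symm hj))).trans_le
      (mul_le_mulVec_of_nonneg hP hu i j)
    simpa using this.ne'
  · intro i
    simp only [Finset.mem_filter, Finset.mem_univ, true_and]
    intro hi
    exact le_antisymm (nonpos_of_mul_nonpos_right
      (hi ▸ mul_le_mulVec_of_nonneg hP hu i i) (hdiag i)) (hu i)

lemma exists_pow_mulVec_pos (hP : ∀ i j, 0 ≤ P i j) (hdiag : ∀ i, 0 < P i i)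
    (hirr : MatIrreducible P) {u : Fin n → ℝ} (hu : 0 ≤ u) (hu0 : u ≠ 0) :
    ∃ k, ∀ i, 0 < (P ^ k *ᵥ u) i := by
  induction hm : (Finset.univ.filter fun i => u i = 0).card using Nat.strong_induction_on
    generalizing u with
  | _ m ih =>
  by_cases hupos : ∀ i, 0 < u i
  · exact ⟨0, by simpa using hupos⟩
  have hPu : 0 ≤ P *ᵥ u := by simpa using mulVec_mono_of_nonneg hP hu
  have hPu0 : P *ᵥ u ≠ 0 := by
    obtain ⟨i, hi⟩ := Function.ne_iff.1 hu0
    exact Function.ne_iff.2 ⟨i, ((mul_pos (hdiag i) (lt_of_le_of_ne (hu i) (Ne.symm hi))).trans_le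
      (mul_le_mulVec_of_nonneg hP hu i i)).ne'⟩
  obtain ⟨k, hk⟩ := ih _ (hm ▸ card_zeros_mulVec_lt hP hdiag hirr hu hu0 hupos) hPu hPu0 rfl
  exact ⟨k + 1, by rwa [pow_succ, ← mulVec_mulVec]⟩

lemma exists_pos_strict_subsolution {A : Matrix (Fin n) (Fin n) ℝ} (hA : ∀ i j, 0 ≤ A i j)
    (hirr : MatIrreducible A) {β γ : Fin n → ℝ} (hβ : ∀ i, 0 < β i)
    (hs : 0 < specAbs (diagonal β * A - diagonal γ)) :
    ∃ v : Fin n → ℝ, (∀ i, 0 < v i) ∧ ∀ i, γ i * v i < β i * (A *ᵥ v) i := by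
  obtain ⟨μ, hμ, w, hw0, hw⟩ := exists_eigenvector_of_specAbs_pos hs
  obtain ⟨d, hd⟩ : ∃ d, ∀ i, γ i < d := by
    obtain ⟨b, hb⟩ := (Set.finite_range γ).bddAbove
    exact ⟨b + 1, fun i => (hb ⟨i, rfl⟩).trans_lt (lt_add_one b)⟩
  set P := diagonal β * A - diagonal γ + diagonal fun _ => d
  have hPij : ∀ i j, P i j = β i * A i j + if i = j then d - γ i else 0 := by
    intro i j; by_cases h : i = j <;> simp [P, h, diagonal_apply_ne]; ring
  have hP : ∀ i j, 0 ≤ P i j := fun i j => by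
    rw [hPij]; split_ifs <;> nlinarith [hβ i, hA i j, hd i]
  have hPdiag : ∀ i, 0 < P i i := fun i => by
    rw [hPij, if_pos rfl]; nlinarith [hβ i, hA i i, hd i]
  have hPirr : MatIrreducible P := fun S hS hSu => by
    obtain ⟨i, hi, j, hj, hAij⟩ := hirr S hS hSu
    refine ⟨i, hi, j, hj, ?_⟩
    rw [hPij, if_neg (by rintro rfl; exact hj hi)]
    simpa using mul_pos (hβ i) hAij
  have hPw : P.map (Complex.ofReal ·) *ᵥ w = (μ + d) • w := by
    ext i; simp [P, Matrix.map_add, add_mulVec, hw, add_mul]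
  set u : Fin n → ℝ := fun j => ‖w j‖
  have hu0 : u ≠ 0 := fun h => hw0 (funext fun j => norm_eq_zero.1 (congrFun h j))
  obtain ⟨k, hk⟩ := exists_pow_mulVec_pos hP hPdiag hPirr (fun j => norm_nonneg (w j)) hu0
  refine ⟨P ^ k *ᵥ u, hk, fun i => ?_⟩
  set v := P ^ k *ᵥ u
  have hgrowth : ‖μ + d‖ * v i ≤ (P *ᵥ v) i :=
    smul_le_mulVec_pow_mulVec hP (norm_mul_norm_le_mulVec_norm hP hPw) k i
  have hPv : (P *ᵥ v) i = β i * (A *ᵥ v) i - γ i * v i + d * v i := by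
    simp [P, add_mulVec, sub_mulVec, ← mulVec_mulVec, mulVec_diagonal]
  have hd' : d + μ.re ≤ ‖μ + d‖ := by simpa [add_comm] using Complex.re_le_norm (μ + d)
  nlinarith [mul_pos hμ (hk i)]

end Irreducible

section Equilibrium

variable {n : ℕ}

def IsEndemicEquilibrium (A : Matrix (Fin n) (Fin n) ℝ) (β γ c x : Fin n → ℝ) : Prop :=
  (∀ i, 0 < x i ∧ x i ≤ 1 / c i) ∧
    ∀ i, β i * (1 - c i * x i) * (1 - x i) * (∑ j, A i j * x j) = γ i * x i

variable {A : Matrix (Fin n) (Fin n) ℝ} {β γ c : Fin n → ℝ}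

/-- Comparing at the index where `x i / y i` is largest shows that this ratio is at most `1`. -/
lemma IsEndemicEquilibrium.le (hA : ∀ i j, 0 ≤ A i j) (hrow : ∀ i, ∃ j, 0 < A i j)
    (hβ : ∀ i, 0 < β i) (hc : ∀ i, 1 < c i) {x y : Fin n → ℝ}
    (hx : IsEndemicEquilibrium A β γ c x) (hy : IsEndemicEquilibrium A β γ c y) : x ≤ y := by
  by_contra hxy
  obtain ⟨j, hj⟩ : ∃ j, y j < x j := by simpa [Pi.le_def] using hxy
  obtain ⟨i, -, hi⟩ := Finset.exists_max_image Finset.univ (fun k => x k / y k)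
    ⟨j, Finset.mem_univ j⟩
  set θ := x i / y i
  have hθ : 1 < θ := ((one_lt_div (hy.1 j).1).2 hj).trans_le (hi j (Finset.mem_univ j))
  have hxi : x i = θ * y i := (div_mul_cancel₀ _ (hy.1 i).1.ne').symm
  have hAx : (A *ᵥ x) i ≤ θ * (A *ᵥ y) i := by
    rw [← smul_eq_mul, ← Pi.smul_apply, ← mulVec_smul]
    exact mulVec_mono_of_nonneg hA
      (fun k => (div_le_iff₀ (hy.1 k).1).1 (hi k (Finset.mem_univ k))) i
  have hK : β i * (1 - c i * x i) * (1 - x i) < β i * (1 - c i * y i) * (1 - y i) := by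
    simp only [mul_assoc]
    exact mul_lt_mul_of_pos_left (strictAntiOn_one_sub_mul_one_sub (hc i)
      ⟨(hy.1 i).1.le, (hy.1 i).2⟩ ⟨(hx.1 i).1.le, (hx.1 i).2⟩ (by nlinarith [(hy.1 i).1]))
      (hβ i)
  have hK0 : 0 ≤ β i * (1 - c i * x i) * (1 - x i) := by
    rw [mul_assoc]; exact mul_nonneg (hβ i).le (one_sub_mul_one_sub_nonneg (hc i) (hx.1 i).2)
  have hAy := mulVec_pos_of_exists_pos hA hrow (fun k => (hy.1 k).1) i
  have hyi : β i * (1 - c i * y i) * (1 - y i) * (A *ᵥ y) i = γ i * y i := hy.2 i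
  have : γ i * x i < γ i * x i :=
    calc γ i * x i = β i * (1 - c i * x i) * (1 - x i) * (A *ᵥ x) i := (hx.2 i).symm
      _ ≤ β i * (1 - c i * x i) * (1 - x i) * (θ * (A *ᵥ y) i) :=
        mul_le_mul_of_nonneg_left hAx hK0
      _ < β i * (1 - c i * y i) * (1 - y i) * (θ * (A *ᵥ y) i) :=
        mul_lt_mul_of_pos_right hK (mul_pos (one_pos.trans hθ) hAy)
      _ = γ i * x i := by rw [hxi]; linear_combination θ * hyi
  exact lt_irrefl _ this

lemma exists_sis_subsolution (hc : ∀ i, 0 < c i) {v : Fin n → ℝ} (hv : ∀ i, 0 < v i)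
    (hsub : ∀ i, γ i * v i < β i * (A *ᵥ v) i) :
    ∃ x₀ : Fin n → ℝ, (∀ i, 0 < x₀ i ∧ x₀ i ≤ 1 / c i) ∧
      ∀ i, γ i * x₀ i ≤ β i * (1 - c i * x₀ i) * (1 - x₀ i) * (A *ᵥ x₀) i := by
  have hev : ∀ i, ∀ᶠ ε in 𝓝 (0 : ℝ), ε * v i < 1 / c i ∧
      γ i * v i < β i * (1 - c i * (ε * v i)) * (1 - ε * v i) * (A *ᵥ v) i := fun i =>
    (continuousAt_id.mul continuousAt_const |>.eventually_lt continuousAt_const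
        (by simpa using hc i)).and
      (continuousAt_const.eventually_lt (by fun_prop) (by simpa using hsub i))
  obtain ⟨ε, hε, hεpos⟩ := ((eventually_all.2 hev).filter_mono nhdsWithin_le_nhds |>.and
    (self_mem_nhdsWithin : Set.Ioi (0 : ℝ) ∈ 𝓝[>] 0)).exists
  refine ⟨ε • v, fun i => ⟨mul_pos hεpos (hv i), (hε i).1.le⟩, fun i => ?_⟩
  rw [mulVec_smul]
  simp only [Pi.smul_apply, smul_eq_mul]
  nlinarith [mul_lt_mul_of_pos_left (hε i).2 (Set.mem_Ioi.1 hεpos)]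

lemma exists_isEndemicEquilibrium (hA : ∀ i j, 0 ≤ A i j) (hrow : ∀ i, ∃ j, 0 < A i j)
    (hβ : ∀ i, 0 < β i) (hγ : ∀ i, 0 ≤ γ i) (hc : ∀ i, 1 < c i) {x₀ : Fin n → ℝ}
    (hx₀ : ∀ i, 0 < x₀ i ∧ x₀ i ≤ 1 / c i)
    (hsub : ∀ i, γ i * x₀ i ≤ β i * (1 - c i * x₀ i) * (1 - x₀ i) * (A *ᵥ x₀) i) :
    ∃ x, IsEndemicEquilibrium A β γ c x := by
  set b : Fin n → ℝ := fun i => 1 / c i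
  have hpos : ∀ z : Set.Icc x₀ b, ∀ i, 0 < (A *ᵥ z.1) i := fun z i =>
    (mulVec_pos_of_exists_pos hA hrow (fun k => (hx₀ k).1) i).trans_le
      (mulVec_mono_of_nonneg hA z.2.1 i)
  choose T hT hTroot using fun (z : Set.Icc x₀ b) i =>
    exists_sis_root (hβ i) (hγ i) (hc i) (hpos z i)
  have hmono : Monotone T := fun z z' hzz' i =>
    sis_root_mono (hβ i) (hγ i) (hc i) (hpos z i) (mulVec_mono_of_nonneg hA hzz' i)
      (hT z i) (hT z' i) (hTroot z i) (hTroot z' i)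
  have hx₀T : x₀ ≤ T ⟨x₀, le_rfl, fun i => (hx₀ i).2⟩ := fun i =>
    le_sis_root (hβ i) (hγ i) (hc i) (hpos _ i) ⟨(hx₀ i).1.le, (hx₀ i).2⟩
      (Set.Ioc_subset_Icc_self (hT _ i)) (hsub i) (hTroot _ i)
  obtain ⟨z, hz⟩ := exists_fixedPoint_of_monotone_Icc (fun i => (hx₀ i).2) T hmono
    fun z => ⟨hx₀T.trans (hmono z.2.1), fun i => (hT z i).2⟩
  refine ⟨z, fun i => hz ▸ hT z i, fun i => ?_⟩
  have := hTroot z i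
  rw [hz] at this
  exact this

end Equilibrium

theorem stmt2_general {n : ℕ} (A : Matrix (Fin n) (Fin n) ℝ)
    (hA : ∀ i j, 0 ≤ A i j) (hirr : MatIrreducible A)
    (β γ c : Fin n → ℝ)
    (hβ : ∀ i, 0 < β i) (hγ : ∀ i, 0 ≤ γ i) (hc : ∀ i, 1 < c i)
    (hs : 0 < specAbs (Matrix.diagonal β * A - Matrix.diagonal γ)) :
    ∃! xbar : Fin n → ℝ, (∀ i, 0 < xbar i ∧ xbar i ≤ 1 / c i) ∧
      ∀ i, β i * (1 - c i * xbar i) * (1 - xbar i) * (∑ j, A i j * xbar j)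
        = γ i * xbar i := by
  obtain ⟨v, hv, hvsub⟩ := exists_pos_strict_subsolution hA hirr hβ hs
  have hrow : ∀ i, ∃ j, 0 < A i j := fun i => exists_pos_of_mulVec_pos (fun j => (hv j).le)
    (pos_of_mul_pos_right ((mul_nonneg (hγ i) (hv i).le).trans_lt (hvsub i)) (hβ i).le)
  obtain ⟨x₀, hx₀, hx₀sub⟩ :=
    exists_sis_subsolution (fun i => one_pos.trans (hc i)) hv hvsub
  obtain ⟨x, hx⟩ := exists_isEndemicEquilibrium hA hrow hβ hγ hc hx₀ hx₀sub
  exact ⟨x, hx, fun y hy => le_antisymm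
    (IsEndemicEquilibrium.le hA hrow hβ hc hy hx) (IsEndemicEquilibrium.le hA hrow hβ hc hx hy)⟩

theorem stmt2 {n : ℕ} (hn : 2 ≤ n) (A : Matrix (Fin n) (Fin n) ℝ)
    (hA : ∀ i j, 0 ≤ A i j) (hirr : MatIrreducible A)
    (β γ c : Fin n → ℝ)
    (hβ : ∀ i, 0 < β i) (hγ : ∀ i, 0 ≤ γ i) (hc : ∀ i, 1 < c i)
    (hs : 0 < specAbs (Matrix.diagonal β * A - Matrix.diagonal γ)) :
    ∃! xbar : Fin n → ℝ, (∀ i, 0 < xbar i ∧ xbar i ≤ 1 / c i) ∧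
      ∀ i, β i * (1 - c i * xbar i) * (1 - xbar i) * (∑ j, A i j * xbar j)
        = γ i * xbar i :=
  stmt2_general A hA hirr β γ c hβ hγ hc hs
end

section
/- Stability of the endemic equilibrium (Proposition 4, second part): Assume A is irreducible, s(BA − Γ) > 0, and c_i ≥ 2 for every i ∈ {1,…,n}. Let x̄ be the unique vector with 0 < x̄_i ≤ 1/c_i for all i satisfying β_i (1 − c_i x̄_i)(1 − x̄_i) ∑_{j=1}^n A_{ij} x̄_j = γ_i x̄_i for all i. Then x̄ is asymptotically stable for the controlled SIS system with domain of attraction K' = ∏_{i=1}^n (0, 1/c_i]; that is, (i) for every ε > 0 there exists δ > 0 such that every solution with x(0) ∈ K' and ‖x(0) − x̄‖ < δ satisfies ‖x(t) − x̄‖ < ε for all t ≥ 0, and (ii) every solution with x(0) ∈ K' satisfies x(t) ∈ K' for all t ≥ 0 and x(t) → x̄ as t → ∞. -/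
open Matrix Filter Topology

/-!
Compare a trajectory with `xbar` through the ratios `x i / xbar i`. At an index where the ratio
attains its maximum `M ≥ 1` (resp. minimum `m ≤ 1`), the equilibrium equation and `c i ≥ 2` give
`(x i / xbar i)' ≤ -κ M (M - 1)` (resp. `≥ κ m (1 - m)`), where `κ = min_i β i ∑ j, A i j * xbar j`
is positive by irreducibility. A first-exit argument then traps every ratio between
`1 - K exp (-l t)` and `1 + L exp (-l t)`, which yields stability and attraction at once. The upper
face `c i * x i = 1` of the box is invariant because the infection term changes sign there; it is
only weakly repelling, so the barrier is moved out by `ε * (1 - exp (-t))` and `ε → 0`.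
-/

open Set Real

theorem exists_pos_le_of_pos {ι : Type*} [Finite ι] {f : ι → ℝ} (hf : ∀ i, 0 < f i) :
    ∃ κ > 0, ∀ i, κ ≤ f i := by
  cases isEmpty_or_nonempty ι
  · exact ⟨1, one_pos, isEmptyElim⟩
  · obtain ⟨i₀, hi₀⟩ := Finite.exists_min f
    exact ⟨f i₀, hf i₀, hi₀⟩

theorem exists_ratio_bounds {ι : Type*} [Finite ι] {u v : ι → ℝ} (hu : ∀ i, 0 < u i)
    (hv : ∀ i, 0 < v i) :
    ∃ K L : ℝ, 0 < K ∧ K < 1 ∧ 0 < L ∧ ∀ i, (1 - K) * v i ≤ u i ∧ u i ≤ (1 + L) * v i := by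
  obtain ⟨μ, hμ, hμuv⟩ := exists_pos_le_of_pos fun i => div_pos (hu i) (hv i)
  obtain ⟨ν, hν, hνvu⟩ := exists_pos_le_of_pos fun i => div_pos (hv i) (hu i)
  refine ⟨1 - min μ (1 / 2), ν⁻¹, by linarith [min_le_right μ (1 / 2)], by simp [hμ],
    inv_pos.2 hν, fun i => ⟨?_, ?_⟩⟩
  · rw [sub_sub_cancel, ← le_div_iff₀ (hv i)]
    exact (min_le_left _ _).trans (hμuv i)
  · have h := (le_div_iff₀ (hu i)).1 (hνvu i)
    calc u i = ν⁻¹ * (ν * u i) := by field_simp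
      _ ≤ ν⁻¹ * v i := by gcongr
      _ ≤ (1 + ν⁻¹) * v i := by nlinarith [hv i]

theorem MatIrreducible.sum_mul_pos {n : ℕ} [Nontrivial (Fin n)] {A : Matrix (Fin n) (Fin n) ℝ}
    (hirr : MatIrreducible A) (hA : ∀ i j, 0 ≤ A i j) {v : Fin n → ℝ} (hv : ∀ j, 0 < v j)
    (i : Fin n) : 0 < ∑ j, A i j * v j := by
  obtain ⟨k, hk, j, -, hkj⟩ := hirr {i} (singleton_nonempty i) (singleton_ne_univ i)
  rw [mem_singleton_iff] at hk
  subst hk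
  exact Finset.sum_pos' (fun j _ => mul_nonneg (hA k j) (hv j).le)
    ⟨j, Finset.mem_univ j, mul_pos hkj (hv j)⟩

theorem HasDerivWithinAt.eventually_lt_of_deriv_neg {h : ℝ → ℝ} {h' t : ℝ}
    (hd : HasDerivWithinAt h h' (Ici t) t) (hneg : h' < 0) : ∀ᶠ z in 𝓝[>] t, h z < h t := by
  filter_upwards [hd.Ioi_of_Ici.limsup_slope_le' (lt_irrefl t) hneg, self_mem_nhdsWithin]
    with z hz htz
  rw [slope_def_field, div_lt_iff₀ (sub_pos.2 htz)] at hz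
  linarith

theorem nonpos_of_deriv_neg_at_zero {ι : Type*} [Finite ι] {f g : ι → ℝ → ℝ} {a : ℝ}
    (hf : ∀ i, ∀ t ≥ a, HasDerivWithinAt (f i) (g i t) (Ici a) t) (ha : ∀ i, f i a ≤ 0)
    (hzero : ∀ t ≥ a, (∀ j, f j t ≤ 0) → ∀ i, f i t = 0 → g i t < 0) :
    ∀ t ≥ a, ∀ i, f i t ≤ 0 := by
  intro b hab
  let s := {t | (fun i => f i t) ≤ 0}
  have hs : IsClosed (s ∩ Icc a b) := by
    have hcont : ContinuousOn (fun t i => f i t) (Icc a b) := continuousOn_pi.2 fun i t ht =>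
      (hf i t ht.1).continuousWithinAt.mono Icc_subset_Ici_self
    rw [inter_comm]
    exact hcont.preimage_isClosed_of_isClosed isClosed_Icc isClosed_Iic
  refine hs.Icc_subset_of_forall_mem_nhdsWithin ha ?_ ⟨hab, le_rfl⟩
  rintro t ⟨hts, hta, -⟩
  refine eventually_all.2 fun i => ?_
  rcases (hts i).lt_or_eq with hlt | hzero_i
  · exact (((hf i t hta).continuousWithinAt.tendsto.mono_left
      (nhdsWithin_mono _ (Ioi_subset_Ici hta))).eventually_lt_const hlt).mono fun _ => le_of_lt
  · have hd := ((hf i t hta).mono (Ici_subset_Ici.2 hta)).eventually_lt_of_deriv_neg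
      (hzero t hta hts i hzero_i)
    exact hd.mono fun z hz => hz.le.trans hzero_i.le

theorem one_sub_mul_one_sub_sub_le {c u v : ℝ} (hc : 2 ≤ c) (huv : u ≤ v) (hv : c * v ≤ 1) :
    (1 - c * v) * (1 - v) - (1 - c * u) * (1 - u) ≤ -(v - u) := by
  have hcuv : c * (u + v) ≤ c := by nlinarith
  nlinarith [mul_nonneg (sub_nonneg.2 huv) (sub_nonneg.2 hcuv)]

section pointwise

variable {n : ℕ} {A : Matrix (Fin n) (Fin n) ℝ} {β γ c xbar y : Fin n → ℝ} {i : Fin n}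

theorem sisF_eq_of_eq_mul (hF : sisF A β γ c xbar i = 0) {r : ℝ} (hy : y i = r * xbar i) :
    sisF A β γ c y i = β i * ((1 - c i * y i) * (1 - y i) * ∑ j, A i j * y j
      - r * ((1 - c i * xbar i) * (1 - xbar i) * ∑ j, A i j * xbar j)) := by
  unfold sisF at hF ⊢
  linear_combination (-γ i) * hy + r * hF

theorem sisF_le_of_le_mul (hA : ∀ j, 0 ≤ A i j) (hβ : 0 ≤ β i) (hc : 2 ≤ c i)
    (hxbar : ∀ j, 0 ≤ xbar j) (hF : sisF A β γ c xbar i = 0) {M : ℝ} (hM : 1 ≤ M)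
    (hle : ∀ j, y j ≤ M * xbar j) (hyi : y i = M * xbar i) (hcy : c i * y i ≤ 1) :
    sisF A β γ c y i ≤ -(β i * (∑ j, A i j * xbar j) * xbar i * (M * (M - 1))) := by
  have hS : ∑ j, A i j * y j ≤ M * ∑ j, A i j * xbar j := by
    rw [Finset.mul_sum]
    exact Finset.sum_le_sum fun j _ => by nlinarith [mul_le_mul_of_nonneg_left (hle j) (hA j)]
  have hP : 0 ≤ ∑ j, A i j * xbar j := Finset.sum_nonneg fun j _ => mul_nonneg (hA j) (hxbar j)
  have hxy : xbar i ≤ y i := by nlinarith [hxbar i]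
  have hφ : 0 ≤ (1 - c i * y i) * (1 - y i) := mul_nonneg (by linarith) (by nlinarith [hxbar i])
  have hφ' := one_sub_mul_one_sub_sub_le hc hxy hcy
  rw [sisF_eq_of_eq_mul hF hyi]
  calc β i * ((1 - c i * y i) * (1 - y i) * ∑ j, A i j * y j
        - M * ((1 - c i * xbar i) * (1 - xbar i) * ∑ j, A i j * xbar j))
      ≤ β i * (M * ∑ j, A i j * xbar j) * ((1 - c i * y i) * (1 - y i)
        - (1 - c i * xbar i) * (1 - xbar i)) := by
        nlinarith [mul_le_mul_of_nonneg_left (mul_le_mul_of_nonneg_left hS hφ) hβ]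
    _ ≤ β i * (M * ∑ j, A i j * xbar j) * -(y i - xbar i) := by
        gcongr
    _ = _ := by rw [hyi]; ring

theorem le_sisF_of_mul_le (hA : ∀ j, 0 ≤ A i j) (hβ : 0 ≤ β i) (hc : 2 ≤ c i)
    (hxbar : ∀ j, 0 ≤ xbar j) (hcx : c i * xbar i ≤ 1) (hF : sisF A β γ c xbar i = 0)
    {m : ℝ} (hm0 : 0 ≤ m) (hm1 : m ≤ 1) (hle : ∀ j, m * xbar j ≤ y j) (hyi : y i = m * xbar i) :
    β i * (∑ j, A i j * xbar j) * xbar i * (m * (1 - m)) ≤ sisF A β γ c y i := by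
  have hS : m * ∑ j, A i j * xbar j ≤ ∑ j, A i j * y j := by
    rw [Finset.mul_sum]
    exact Finset.sum_le_sum fun j _ => by nlinarith [mul_le_mul_of_nonneg_left (hle j) (hA j)]
  have hP : 0 ≤ ∑ j, A i j * xbar j := Finset.sum_nonneg fun j _ => mul_nonneg (hA j) (hxbar j)
  have hyx : y i ≤ xbar i := by nlinarith [hxbar i]
  have hφ : 0 ≤ (1 - c i * y i) * (1 - y i) :=
    mul_nonneg (by nlinarith) (by nlinarith [hxbar i])
  have hφ' := one_sub_mul_one_sub_sub_le hc hyx hcx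
  rw [sisF_eq_of_eq_mul hF hyi]
  calc β i * (∑ j, A i j * xbar j) * xbar i * (m * (1 - m))
      = β i * (m * ∑ j, A i j * xbar j) * (xbar i - y i) := by rw [hyi]; ring
    _ ≤ β i * (m * ∑ j, A i j * xbar j) * ((1 - c i * y i) * (1 - y i)
        - (1 - c i * xbar i) * (1 - xbar i)) := by
        exact mul_le_mul_of_nonneg_left (by linarith) (by positivity)
    _ ≤ β i * ((1 - c i * y i) * (1 - y i) * ∑ j, A i j * y j
        - m * ((1 - c i * xbar i) * (1 - xbar i) * ∑ j, A i j * xbar j)) := by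
        nlinarith [mul_le_mul_of_nonneg_left (mul_le_mul_of_nonneg_left hS hφ) hβ]

theorem sisF_nonpos (hA : ∀ j, 0 ≤ A i j) (hβ : 0 ≤ β i) (hγ : 0 ≤ γ i) (hy : ∀ j, 0 ≤ y j)
    (hcy : 1 ≤ c i * y i) (hy1 : y i ≤ 1) : sisF A β γ c y i ≤ 0 := by
  have hφ : β i * (1 - c i * y i) * (1 - y i) ≤ 0 :=
    mul_nonpos_of_nonpos_of_nonneg (mul_nonpos_of_nonneg_of_nonpos hβ (by linarith))
      (by linarith)
  have hS : 0 ≤ ∑ j, A i j * y j := Finset.sum_nonneg fun j _ => mul_nonneg (hA j) (hy j)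
  unfold sisF
  nlinarith [mul_nonpos_of_nonpos_of_nonneg hφ hS, mul_nonneg hγ (hy i)]

end pointwise

section solutions

variable {n : ℕ} {A : Matrix (Fin n) (Fin n) ℝ} {β γ c xbar : Fin n → ℝ} {x : ℝ → Fin n → ℝ}

theorem IsSol.hasDerivWithinAt_apply (hsol : IsSol A β γ c x) (i : Fin n) {t : ℝ}
    (ht : 0 ≤ t) : HasDerivWithinAt (fun s => x s i) (sisF A β γ c (x t) i) (Ici 0) t :=
  hasDerivWithinAt_pi.1 (hsol t ht) i

theorem IsSol.mul_le_of_deriv_lt (hsol : IsSol A β γ c x) (hA : ∀ i j, 0 ≤ A i j)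
    (hβ : ∀ i, 0 ≤ β i) (hc : ∀ i, 2 ≤ c i) (hxbar : ∀ i, 0 < xbar i)
    (hcx : ∀ i, c i * xbar i ≤ 1) (hF : ∀ i, sisF A β γ c xbar i = 0) {κ : ℝ}
    (hκ : ∀ i, κ ≤ β i * ∑ j, A i j * xbar j) {m m' : ℝ → ℝ}
    (hm : ∀ t, HasDerivAt m (m' t) t) (hm01 : ∀ t ≥ 0, 0 ≤ m t ∧ m t ≤ 1)
    (hm' : ∀ t ≥ 0, m' t < κ * (m t * (1 - m t))) (h0 : ∀ i, m 0 * xbar i ≤ x 0 i) :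
    ∀ t ≥ 0, ∀ i, m t * xbar i ≤ x t i := by
  have key := nonpos_of_deriv_neg_at_zero (f := fun i t => m t - x t i / xbar i)
    (fun i t ht => (hm t).hasDerivWithinAt.sub ((hsol.hasDerivWithinAt_apply i ht).div_const _))
    (fun i => by simpa [le_div_iff₀ (hxbar i)] using h0 i) ?_
  · intro t ht i
    simpa [le_div_iff₀ (hxbar i)] using key t ht i
  intro t ht hle i hi
  have hle' : ∀ j, m t * xbar j ≤ x t j := fun j => by
    simpa [le_div_iff₀ (hxbar j)] using hle j
  have hxi : x t i = m t * xbar i := by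
    rw [sub_eq_zero, eq_div_iff (hxbar i).ne'] at hi
    exact hi.symm
  have hF_lower := le_sisF_of_mul_le (hA i) (hβ i) (hc i) (fun j => (hxbar j).le) (hcx i) (hF i)
    (hm01 t ht).1 (hm01 t ht).2 hle' hxi
  have hm1 : 0 ≤ m t * (1 - m t) := mul_nonneg (hm01 t ht).1 (sub_nonneg.2 (hm01 t ht).2)
  rw [sub_neg, lt_div_iff₀ (hxbar i)]
  calc m' t * xbar i < κ * (m t * (1 - m t)) * xbar i :=
        mul_lt_mul_of_pos_right (hm' t ht) (hxbar i)
    _ ≤ (β i * ∑ j, A i j * xbar j) * (m t * (1 - m t)) * xbar i :=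
        mul_le_mul_of_nonneg_right (mul_le_mul_of_nonneg_right (hκ i) hm1) (hxbar i).le
    _ ≤ sisF A β γ c (x t) i := by linarith

theorem IsSol.le_mul_of_lt_deriv (hsol : IsSol A β γ c x) (hA : ∀ i j, 0 ≤ A i j)
    (hβ : ∀ i, 0 ≤ β i) (hc : ∀ i, 2 ≤ c i) (hxbar : ∀ i, 0 < xbar i)
    (hF : ∀ i, sisF A β γ c xbar i = 0) (hcx : ∀ t ≥ 0, ∀ i, c i * x t i ≤ 1) {κ : ℝ}
    (hκ : ∀ i, κ ≤ β i * ∑ j, A i j * xbar j) {M M' : ℝ → ℝ}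
    (hM : ∀ t, HasDerivAt M (M' t) t) (hM1 : ∀ t ≥ 0, 1 ≤ M t)
    (hM' : ∀ t ≥ 0, -(κ * (M t * (M t - 1))) < M' t) (h0 : ∀ i, x 0 i ≤ M 0 * xbar i) :
    ∀ t ≥ 0, ∀ i, x t i ≤ M t * xbar i := by
  have key := nonpos_of_deriv_neg_at_zero (f := fun i t => x t i / xbar i - M t)
    (fun i t ht => ((hsol.hasDerivWithinAt_apply i ht).div_const _).sub (hM t).hasDerivWithinAt)
    (fun i => by simpa [div_le_iff₀ (hxbar i)] using h0 i) ?_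
  · intro t ht i
    simpa [div_le_iff₀ (hxbar i)] using key t ht i
  intro t ht hle i hi
  have hle' : ∀ j, x t j ≤ M t * xbar j := fun j => by
    simpa [div_le_iff₀ (hxbar j)] using hle j
  have hxi : x t i = M t * xbar i := by
    rw [sub_eq_zero, div_eq_iff (hxbar i).ne'] at hi
    exact hi
  have hF_upper := sisF_le_of_le_mul (hA i) (hβ i) (hc i) (fun j => (hxbar j).le) (hF i)
    (hM1 t ht) hle' hxi (hcx t ht i)
  have hM1' : 0 ≤ M t * (M t - 1) := mul_nonneg (by linarith [hM1 t ht]) (by linarith [hM1 t ht])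
  rw [sub_neg, div_lt_iff₀ (hxbar i)]
  calc sisF A β γ c (x t) i ≤ -((β i * ∑ j, A i j * xbar j) * (M t * (M t - 1)) * xbar i) := by
        linarith
    _ ≤ -(κ * (M t * (M t - 1)) * xbar i) :=
        neg_le_neg (mul_le_mul_of_nonneg_right (mul_le_mul_of_nonneg_right (hκ i) hM1') (hxbar i).le)
    _ < M' t * xbar i := by nlinarith [mul_lt_mul_of_pos_right (hM' t ht) (hxbar i)]

theorem IsSol.mul_le_one (hsol : IsSol A β γ c x) (hA : ∀ i j, 0 ≤ A i j) (hβ : ∀ i, 0 ≤ β i)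
    (hγ : ∀ i, 0 ≤ γ i) (hc : ∀ i, 1 < c i) (hpos : ∀ t ≥ 0, ∀ j, 0 ≤ x t j)
    (h0 : ∀ i, c i * x 0 i ≤ 1) : ∀ t ≥ 0, ∀ i, c i * x t i ≤ 1 := by
  intro t ht i
  have hε : ∀ᶠ ε in 𝓝[>] (0 : ℝ), c i * x t i ≤ 1 + ε := by
    filter_upwards [self_mem_nhdsWithin, nhdsWithin_le_nhds
      (eventually_all.2 fun j => eventually_lt_nhds (sub_pos.2 (hc j)))] with ε hε hεc
    have key := nonpos_of_deriv_neg_at_zero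
      (f := fun j s => c j * x s j - 1 - ε * (1 - exp (-s)))
      (g := fun j s => c j * sisF A β γ c (x s) j - ε * exp (-s))
      (fun j s hs => (((hsol.hasDerivWithinAt_apply j hs).const_mul (c j)).sub_const 1).sub
        ((((hasDerivAt_neg s).exp.const_sub 1).const_mul ε).congr_deriv (by ring)).hasDerivWithinAt)
      (fun j => by simpa using h0 j) ?_
    · nlinarith [key t ht i, exp_pos (-t), mul_pos hε (exp_pos (-t))]
    intro s hs _ j hj
    have hexp : exp (-s) ≤ 1 := exp_le_one_iff.2 (neg_nonpos.2 hs)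
    have hcj : 1 ≤ c j * x s j := by nlinarith [mul_nonneg hε.le (sub_nonneg.2 hexp)]
    have hxj : x s j ≤ 1 := by
      have : c j * x s j < c j * 1 := by nlinarith [hεc j, mul_pos hε (exp_pos (-s))]
      exact (lt_of_mul_lt_mul_left this (by linarith [hc j])).le
    have := sisF_nonpos (hA j) (hβ j) (hγ j) (hpos s hs) hcj hxj
    nlinarith [hc j, mul_pos hε (exp_pos (-s))]
  have hlim : Tendsto (fun ε : ℝ => 1 + ε) (𝓝[>] 0) (𝓝 1) := by
    simpa using (tendsto_const_nhds.add tendsto_id).mono_left (nhdsWithin_le_nhds (a := (0:ℝ)))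
  exact ge_of_tendsto hlim hε

theorem IsSol.exp_bounds (hsol : IsSol A β γ c x)
    (hA : ∀ i j, 0 ≤ A i j) (hβ : ∀ i, 0 ≤ β i) (hγ : ∀ i, 0 ≤ γ i)
    (hc2 : ∀ i, 2 ≤ c i) (hxbar : ∀ i, 0 < xbar i) (hcx : ∀ i, c i * xbar i ≤ 1)
    (hF : ∀ i, sisF A β γ c xbar i = 0) {κ : ℝ} (hκ0 : 0 < κ)
    (hκ : ∀ i, κ ≤ β i * ∑ j, A i j * xbar j) (h0 : ∀ i, c i * x 0 i ≤ 1) {K L : ℝ}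
    (hK0 : 0 < K) (hK1 : K < 1) (hL : 0 < L) (hlow : ∀ i, (1 - K) * xbar i ≤ x 0 i)
    (hup : ∀ i, x 0 i ≤ (1 + L) * xbar i) :
    ∃ l > 0, ∀ t ≥ 0, ∀ i, (1 - K * exp (-(l * t))) * xbar i ≤ x t i ∧
      x t i ≤ (1 + L * exp (-(l * t))) * xbar i ∧ c i * x t i ≤ 1 := by
  have hexp : ∀ l t : ℝ, HasDerivAt (fun s => exp (-(l * s))) (-(l * exp (-(l * t)))) t :=
    fun l t => ((hasDerivAt_id' t).const_mul l).neg.exp.congr_deriv (by simp [mul_comm])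
  -- the lower comparison needs `l < κ * (1 - K)`, and `1 - K` is the smallest value of `m`
  set l := κ * (1 - K) / 2 with hl_def
  have hl : 0 < l := div_pos (mul_pos hκ0 (sub_pos.2 hK1)) two_pos
  have he : ∀ t ≥ 0, 0 < exp (-(l * t)) ∧ exp (-(l * t)) ≤ 1 := fun t ht =>
    ⟨exp_pos _, exp_le_one_iff.2 (neg_nonpos.2 (mul_nonneg hl.le ht))⟩
  have hlower := hsol.mul_le_of_deriv_lt hA hβ hc2 hxbar hcx hF hκ
    (fun t => ((hexp l t).const_mul K).const_sub 1)
    (fun t ht => ⟨by nlinarith [he t ht], by nlinarith [he t ht]⟩)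
    (fun t ht => by
      have hKe := mul_pos hK0 (he t ht).1
      have hKe1 : K * exp (-(l * t)) ≤ K := mul_le_of_le_one_right hK0.le (he t ht).2
      have : l < κ * (1 - K * exp (-(l * t))) := by
        nlinarith [mul_le_mul_of_nonneg_left hKe1 hκ0.le, mul_pos hκ0 (sub_pos.2 hK1)]
      nlinarith [mul_lt_mul_of_pos_right this hKe])
    (by simpa using hlow)
  have hpos : ∀ t ≥ 0, ∀ j, 0 ≤ x t j := fun t ht j =>
    (mul_nonneg (by nlinarith [he t ht]) (hxbar j).le).trans (hlower t ht j)
  have hcxt := hsol.mul_le_one hA hβ hγ (fun i => by linarith [hc2 i]) hpos h0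
  have hupper := hsol.le_mul_of_lt_deriv hA hβ hc2 hxbar hF hcxt hκ
    (fun t => ((hexp l t).const_mul L).const_add 1)
    (fun t ht => by nlinarith [he t ht])
    (fun t ht => by
      have hLe := mul_pos hL (he t ht).1
      have : l < κ * (1 + L * exp (-(l * t))) := by
        nlinarith [mul_pos hκ0 hLe, mul_pos hκ0 hK0]
      nlinarith [mul_lt_mul_of_pos_right this hLe])
    (by simpa using hup)
  exact ⟨l, hl, fun t ht i => ⟨hlower t ht i, hupper t ht i, hcxt t ht i⟩⟩

theorem sis_stable (hA : ∀ i j, 0 ≤ A i j) (hβ : ∀ i, 0 ≤ β i) (hγ : ∀ i, 0 ≤ γ i)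
    (hc2 : ∀ i, 2 ≤ c i) (hxbar : ∀ i, 0 < xbar i)
    (hcx : ∀ i, c i * xbar i ≤ 1) (hF : ∀ i, sisF A β γ c xbar i = 0) {κ : ℝ} (hκ0 : 0 < κ)
    (hκ : ∀ i, κ ≤ β i * ∑ j, A i j * xbar j) :
    ∀ ε > 0, ∃ δ > 0, ∀ x : ℝ → Fin n → ℝ, IsSol A β γ c x →
      (∀ i, x 0 i ∈ Set.Ioc 0 (1 / c i)) → ‖x 0 - xbar‖ < δ →
      ∀ t : ℝ, 0 ≤ t → ‖x t - xbar‖ < ε := by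
  intro ε hε
  obtain ⟨μ, hμ, hμx⟩ := exists_pos_le_of_pos hxbar
  set K := min ε 1 / 2 with hK
  have hK0 : 0 < K := by positivity
  have hK1 : K < 1 := by linarith [min_le_right ε 1]
  have hKε : K < ε := by linarith [min_le_left ε 1]
  refine ⟨K * μ, mul_pos hK0 hμ, fun x hsol hx0 hnorm t ht => ?_⟩
  have hclose : ∀ i, |x 0 i - xbar i| ≤ K * xbar i := fun i => by
    have := (norm_le_pi_norm (x 0 - xbar) i).trans hnorm.le
    rw [Pi.sub_apply, Real.norm_eq_abs] at this
    nlinarith [hμx i]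
  obtain ⟨l, hl, hx⟩ := hsol.exp_bounds hA hβ hγ hc2 hxbar hcx hF hκ0 hκ
    (fun i => (le_div_iff₀' (by linarith [hc2 i])).1 (hx0 i).2) hK0 hK1 hK0
    (fun i => by linarith [abs_le.1 (hclose i)]) (fun i => by linarith [abs_le.1 (hclose i)])
  refine (pi_norm_lt_iff hε).2 fun i => ?_
  obtain ⟨hlow, hup, -⟩ := hx t ht i
  have hKe : K * exp (-(l * t)) * xbar i ≤ K * xbar i := mul_le_mul_of_nonneg_right
    (mul_le_of_le_one_right hK0.le (exp_le_one_iff.2 (by nlinarith))) (hxbar i).le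
  have hKx : K * xbar i < ε := by nlinarith [hcx i, hc2 i, hxbar i]
  rw [Pi.sub_apply, Real.norm_eq_abs, abs_lt]
  constructor <;> nlinarith

theorem sis_attractive (hA : ∀ i j, 0 ≤ A i j) (hβ : ∀ i, 0 ≤ β i) (hγ : ∀ i, 0 ≤ γ i)
    (hc2 : ∀ i, 2 ≤ c i) (hxbar : ∀ i, 0 < xbar i)
    (hcx : ∀ i, c i * xbar i ≤ 1) (hF : ∀ i, sisF A β γ c xbar i = 0) {κ : ℝ} (hκ0 : 0 < κ)
    (hκ : ∀ i, κ ≤ β i * ∑ j, A i j * xbar j) :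
    ∀ x : ℝ → Fin n → ℝ, IsSol A β γ c x →
      (∀ i, x 0 i ∈ Set.Ioc 0 (1 / c i)) →
      (∀ t : ℝ, 0 ≤ t → ∀ i, x t i ∈ Set.Ioc 0 (1 / c i)) ∧
      Tendsto x atTop (𝓝 xbar) := by
  intro x hsol hx0
  obtain ⟨K, L, hK0, hK1, hL, hKL⟩ := exists_ratio_bounds (fun i => (hx0 i).1) hxbar
  obtain ⟨l, hl, hx⟩ := hsol.exp_bounds hA hβ hγ hc2 hxbar hcx hF hκ0 hκ
    (fun i => (le_div_iff₀' (by linarith [hc2 i])).1 (hx0 i).2) hK0 hK1 hL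
    (fun i => (hKL i).1) (fun i => (hKL i).2)
  have he : Tendsto (fun t => exp (-(l * t))) atTop (𝓝 0) :=
    tendsto_exp_neg_atTop_nhds_zero.comp (tendsto_id.const_mul_atTop hl)
  refine ⟨fun t ht i => ⟨?_, (le_div_iff₀' (by linarith [hc2 i])).2 (hx t ht i).2.2⟩,
    tendsto_pi_nhds.2 fun i => ?_⟩
  · have hKe : K * exp (-(l * t)) ≤ K :=
      mul_le_of_le_one_right hK0.le (exp_le_one_iff.2 (by nlinarith))
    exact (mul_pos (by linarith) (hxbar i)).trans_le (hx t ht i).1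
  · refine tendsto_of_tendsto_of_tendsto_of_le_of_le' ?_ ?_
      (eventually_atTop.2 ⟨0, fun t ht => (hx t ht i).1⟩)
      (eventually_atTop.2 ⟨0, fun t ht => (hx t ht i).2.1⟩)
    · simpa using ((he.const_mul K).const_sub 1).mul_const (xbar i)
    · simpa using ((he.const_mul L).const_add 1).mul_const (xbar i)

end solutions

theorem stmt3_general {n : ℕ} (hn : 2 ≤ n) (A : Matrix (Fin n) (Fin n) ℝ)
    (hA : ∀ i j, 0 ≤ A i j) (hirr : MatIrreducible A)
    (β γ c : Fin n → ℝ)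
    (hβ : ∀ i, 0 < β i) (hγ : ∀ i, 0 ≤ γ i)
    (hc2 : ∀ i, 2 ≤ c i)
    (xbar : Fin n → ℝ) (hxbar : ∀ i, 0 < xbar i ∧ xbar i ≤ 1 / c i)
    (heq : ∀ i, β i * (1 - c i * xbar i) * (1 - xbar i) * (∑ j, A i j * xbar j)
      = γ i * xbar i) :
    (∀ ε > 0, ∃ δ > 0, ∀ x : ℝ → Fin n → ℝ, IsSol A β γ c x →
      (∀ i, x 0 i ∈ Set.Ioc 0 (1 / c i)) → ‖x 0 - xbar‖ < δ →
      ∀ t : ℝ, 0 ≤ t → ‖x t - xbar‖ < ε) ∧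
    (∀ x : ℝ → Fin n → ℝ, IsSol A β γ c x →
      (∀ i, x 0 i ∈ Set.Ioc 0 (1 / c i)) →
      (∀ t : ℝ, 0 ≤ t → ∀ i, x t i ∈ Set.Ioc 0 (1 / c i)) ∧
      Tendsto x atTop (𝓝 xbar)) := by
  have : Nontrivial (Fin n) := Fin.nontrivial_iff_two_le.2 hn
  have hxbar0 : ∀ i, 0 < xbar i := fun i => (hxbar i).1
  have hcx : ∀ i, c i * xbar i ≤ 1 := fun i =>
    (le_div_iff₀' (by linarith [hc2 i])).1 (hxbar i).2
  have hF : ∀ i, sisF A β γ c xbar i = 0 := fun i => sub_eq_zero.2 (heq i)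
  obtain ⟨κ, hκ0, hκ⟩ := exists_pos_le_of_pos fun i =>
    mul_pos (hβ i) (hirr.sum_mul_pos hA hxbar0 i)
  have hβ0 : ∀ i, 0 ≤ β i := fun i => (hβ i).le
  exact ⟨sis_stable hA hβ0 hγ hc2 hxbar0 hcx hF hκ0 hκ,
    sis_attractive hA hβ0 hγ hc2 hxbar0 hcx hF hκ0 hκ⟩

theorem stmt3 {n : ℕ} (hn : 2 ≤ n) (A : Matrix (Fin n) (Fin n) ℝ)
    (hA : ∀ i j, 0 ≤ A i j) (hirr : MatIrreducible A)
    (β γ c : Fin n → ℝ)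
    (hβ : ∀ i, 0 < β i) (hγ : ∀ i, 0 ≤ γ i) (hc : ∀ i, 1 < c i)
    (hs : 0 < specAbs (Matrix.diagonal β * A - Matrix.diagonal γ))
    (hc2 : ∀ i, 2 ≤ c i)
    (xbar : Fin n → ℝ) (hxbar : ∀ i, 0 < xbar i ∧ xbar i ≤ 1 / c i)
    (heq : ∀ i, β i * (1 - c i * xbar i) * (1 - xbar i) * (∑ j, A i j * xbar j)
      = γ i * xbar i) :
    (∀ ε > 0, ∃ δ > 0, ∀ x : ℝ → Fin n → ℝ, IsSol A β γ c x →
      (∀ i, x 0 i ∈ Set.Ioc 0 (1 / c i)) → ‖x 0 - xbar‖ < δ →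
      ∀ t : ℝ, 0 ≤ t → ‖x t - xbar‖ < ε) ∧
    (∀ x : ℝ → Fin n → ℝ, IsSol A β γ c x →
      (∀ i, x 0 i ∈ Set.Ioc 0 (1 / c i)) →
      (∀ t : ℝ, 0 ≤ t → ∀ i, x t i ∈ Set.Ioc 0 (1 / c i)) ∧
      Tendsto x atTop (𝓝 xbar)) :=
  stmt3_general hn A hA hirr β γ c hβ hγ hc2 xbar hxbar heq
end

section
/- Strict Lyapunov decrease in the strictly stable case: Let P be an n×n positive diagonal matrix such that the symmetric matrix (BA − Γ)ᵀP + P(BA − Γ) is negative definite. Then for every x ∈ ℝⁿ with 0 ≤ x_i ≤ 1/c_i for all i and x ≠ 0, writing X = diag(x), one has 2 xᵀ P ((I − DX)(I − X) B A − Γ) x < 0. -/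
open Matrix

theorem stmt7 {n : ℕ} (hn : 1 ≤ n) (A : Matrix (Fin n) (Fin n) ℝ)
    (hA : ∀ i j, 0 ≤ A i j) (β γ c : Fin n → ℝ)
    (hβ : ∀ i, 0 < β i) (hγ : ∀ i, 0 ≤ γ i) (hc : ∀ i, 1 < c i)
    (p : Fin n → ℝ) (hp : ∀ i, 0 < p i)
    (hnd : ∀ v : Fin n → ℝ, v ≠ 0 →
      v ⬝ᵥ (((Matrix.diagonal β * A - Matrix.diagonal γ)ᵀ * Matrix.diagonal p +
        Matrix.diagonal p * (Matrix.diagonal β * A - Matrix.diagonal γ)) *ᵥ v) < 0)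
    (x : Fin n → ℝ) (hx : ∀ i, 0 ≤ x i ∧ x i ≤ 1 / c i) (hx0 : x ≠ 0) :
    2 * (x ⬝ᵥ (Matrix.diagonal p *ᵥ
      (((1 - Matrix.diagonal c * Matrix.diagonal x) * (1 - Matrix.diagonal x) *
        (Matrix.diagonal β * A) - Matrix.diagonal γ) *ᵥ x))) < 0 := by
  set BA : Matrix (Fin n) (Fin n) ℝ := Matrix.diagonal β * A with hBAdef
  set M0 : Matrix (Fin n) (Fin n) ℝ := BA - Matrix.diagonal γ with hM0def
  -- the quadratic form identity
  have hsym : x ⬝ᵥ ((M0ᵀ * Matrix.diagonal p + Matrix.diagonal p * M0) *ᵥ x)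
      = 2 * (x ⬝ᵥ (Matrix.diagonal p *ᵥ (M0 *ᵥ x))) := by
    have h1 : x ⬝ᵥ ((M0ᵀ * Matrix.diagonal p) *ᵥ x)
        = (M0 *ᵥ x) ⬝ᵥ (Matrix.diagonal p *ᵥ x) := by
      rw [← Matrix.mulVec_mulVec, Matrix.dotProduct_mulVec, Matrix.vecMul_transpose]
    have h2 : x ⬝ᵥ (Matrix.diagonal p *ᵥ (M0 *ᵥ x))
        = (M0 *ᵥ x) ⬝ᵥ (Matrix.diagonal p *ᵥ x) := by
      rw [Matrix.dotProduct_mulVec]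
      have : x ᵥ* Matrix.diagonal p = Matrix.diagonal p *ᵥ x := by
        funext i
        simp [Matrix.vecMul_diagonal, Matrix.mulVec_diagonal, mul_comm]
      rw [this, dotProduct_comm]
    rw [Matrix.add_mulVec, dotProduct_add, h1, ← Matrix.mulVec_mulVec, h2]
    ring
  have hneg : 2 * (x ⬝ᵥ (Matrix.diagonal p *ᵥ (M0 *ᵥ x))) < 0 := by
    rw [← hsym]; exact hnd x hx0
  -- rewrite the product of diagonals
  have hfdiag : (1 - Matrix.diagonal c * Matrix.diagonal x) * (1 - Matrix.diagonal x)
      = Matrix.diagonal (fun i => (1 - c i * x i) * (1 - x i)) := by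
    rw [Matrix.diagonal_mul_diagonal, ← Matrix.diagonal_one, Matrix.diagonal_sub,
      Matrix.diagonal_sub, Matrix.diagonal_mul_diagonal]
  set f : Fin n → ℝ := fun i => (1 - c i * x i) * (1 - x i) with hfdef
  have hf01 : ∀ i, 0 ≤ f i ∧ f i ≤ 1 := by
    intro i
    have hc' := hc i
    have hx1 := (hx i).1
    have hx2 := (hx i).2
    have hcx : c i * x i ≤ 1 := by
      have hcpos : 0 < c i := lt_trans one_pos hc'
      calc c i * x i ≤ c i * (1 / c i) := by
            exact mul_le_mul_of_nonneg_left hx2 hcpos.le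
        _ = 1 := by field_simp
    have hxle1 : x i ≤ 1 := by
      have hcpos : 0 < c i := lt_trans one_pos hc'
      calc x i ≤ 1 / c i := hx2
        _ ≤ 1 := by rw [div_le_one hcpos]; exact hc'.le
    constructor
    · apply mul_nonneg <;> linarith [mul_nonneg (le_of_lt (lt_trans one_pos hc')) hx1]
    · show (1 - c i * x i) * (1 - x i) ≤ 1
      nlinarith [mul_nonneg (sub_nonneg.mpr hcx) hx1]
  have hBAx : ∀ i, 0 ≤ (BA *ᵥ x) i := by
    intro i
    rw [hBAdef, ← Matrix.mulVec_mulVec, Matrix.mulVec_diagonal]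
    apply mul_nonneg (hβ i).le
    simp only [Matrix.mulVec, dotProduct]
    apply Finset.sum_nonneg
    intro j _
    exact mul_nonneg (hA i j) (hx j).1
  -- compare the two quadratic forms termwise
  have hle : x ⬝ᵥ (Matrix.diagonal p *ᵥ
      (((1 - Matrix.diagonal c * Matrix.diagonal x) * (1 - Matrix.diagonal x) *
        BA - Matrix.diagonal γ) *ᵥ x))
      ≤ x ⬝ᵥ (Matrix.diagonal p *ᵥ (M0 *ᵥ x)) := by
    rw [hfdiag, hM0def]
    simp only [Matrix.sub_mulVec, ← Matrix.mulVec_mulVec]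
    apply Finset.sum_le_sum
    intro i _
    simp only [Pi.sub_apply, Matrix.mulVec_diagonal]
    have hpx : 0 ≤ p i * x i := mul_nonneg (hp i).le (hx i).1
    have := hBAx i
    have hfi := hf01 i
    nlinarith [mul_nonneg hpx this]
  calc 2 * (x ⬝ᵥ (Matrix.diagonal p *ᵥ
      (((1 - Matrix.diagonal c * Matrix.diagonal x) * (1 - Matrix.diagonal x) *
        BA - Matrix.diagonal γ) *ᵥ x)))
      ≤ 2 * (x ⬝ᵥ (Matrix.diagonal p *ᵥ (M0 *ᵥ x))) := by linarith
    _ < 0 := hneg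
end

section
/- Strict Lyapunov decrease in the marginally stable case: Assume A is irreducible. Let P be an n×n positive diagonal matrix such that the symmetric matrix (BA − Γ)ᵀP + P(BA − Γ) is negative semidefinite. Then for every x ∈ ℝⁿ with 0 ≤ x_i ≤ 1/c_i for all i and x ≠ 0, writing X = diag(x), one has 2 xᵀ P ((I − DX)(I − X) B A − Γ) x < 0. -/
open Matrix

theorem stmt8 {n : ℕ} (hn : 2 ≤ n) (A : Matrix (Fin n) (Fin n) ℝ)
    (hA : ∀ i j, 0 ≤ A i j) (hirr : MatIrreducible A)
    (β γ c : Fin n → ℝ)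
    (hβ : ∀ i, 0 < β i) (hγ : ∀ i, 0 ≤ γ i) (hc : ∀ i, 1 < c i)
    (p : Fin n → ℝ) (hp : ∀ i, 0 < p i)
    (hnsd : ∀ v : Fin n → ℝ,
      v ⬝ᵥ (((Matrix.diagonal β * A - Matrix.diagonal γ)ᵀ * Matrix.diagonal p +
        Matrix.diagonal p * (Matrix.diagonal β * A - Matrix.diagonal γ)) *ᵥ v) ≤ 0)
    (x : Fin n → ℝ) (hx : ∀ i, 0 ≤ x i ∧ x i ≤ 1 / c i) (hx0 : x ≠ 0) :
    2 * (x ⬝ᵥ (Matrix.diagonal p *ᵥ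
      (((1 - Matrix.diagonal c * Matrix.diagonal x) * (1 - Matrix.diagonal x) *
        (Matrix.diagonal β * A) - Matrix.diagonal γ) *ᵥ x))) < 0 := by
  -- basic facts
  have hxn : ∀ i, 0 ≤ x i := fun i => (hx i).1
  have hcx : ∀ i, c i * x i ≤ 1 := by
    intro i
    have h1 := (hx i).2
    have h2 : 0 < c i := lt_trans one_pos (hc i)
    rw [le_div_iff₀ h2] at h1
    linarith [h1]
  set Q : Matrix (Fin n) (Fin n) ℝ :=
    (Matrix.diagonal β * A - Matrix.diagonal γ)ᵀ * Matrix.diagonal p +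
      Matrix.diagonal p * (Matrix.diagonal β * A - Matrix.diagonal γ) with hQdef
  have hQe : ∀ i j, Q i j =
      p j * β j * A j i + p i * β i * A i j - (if i = j then 2 * p i * γ i else 0) := by
    intro i j
    rw [hQdef]
    simp only [Matrix.add_apply, Matrix.mul_diagonal, Matrix.diagonal_mul,
      Matrix.transpose_apply, Matrix.sub_apply, Matrix.diagonal_apply]
    by_cases h : i = j
    · subst h; simp; ring
    · simp [h, Ne.symm h]; ring
  have hQsym : Qᵀ = Q := by
    rw [hQdef, transpose_add, transpose_mul, transpose_mul, transpose_transpose,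
      Matrix.diagonal_transpose, add_comm]
  have hsymdot : ∀ v w : Fin n → ℝ, v ⬝ᵥ (Q *ᵥ w) = w ⬝ᵥ (Q *ᵥ v) := by
    intro v w
    rw [dotProduct_mulVec, ← mulVec_transpose, hQsym, dotProduct_comm]
  -- entries of the goal matrix
  have h1d : (1 : Matrix (Fin n) (Fin n) ℝ) - Matrix.diagonal c * Matrix.diagonal x
      = diagonal (fun i => 1 - c i * x i) := by
    rw [diagonal_mul_diagonal, ← Matrix.diagonal_one, diagonal_sub]
  have h2d : (1 : Matrix (Fin n) (Fin n) ℝ) - Matrix.diagonal x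
      = diagonal (fun i => 1 - x i) := by
    rw [← Matrix.diagonal_one, diagonal_sub]
  have hMe : ∀ i j, (((1 - Matrix.diagonal c * Matrix.diagonal x) * (1 - Matrix.diagonal x) *
        (Matrix.diagonal β * A) - Matrix.diagonal γ)) i j =
      (1 - c i * x i) * ((1 - x i) * (β i * A i j)) - (if i = j then γ i else 0) := by
    intro i j
    rw [h1d, h2d, diagonal_mul_diagonal]
    simp [Matrix.sub_apply, Matrix.diagonal_mul, Matrix.diagonal_apply, mul_assoc]
  -- sum form of dot products
  have hdot : ∀ (M : Matrix (Fin n) (Fin n) ℝ) (v w : Fin n → ℝ),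
      v ⬝ᵥ (M *ᵥ w) = ∑ i, ∑ j, v i * M i j * w j := by
    intro M v w
    simp [dotProduct, mulVec, Finset.mul_sum, mul_assoc]
  have hdiagp : ∀ w : Fin n → ℝ, Matrix.diagonal p *ᵥ w = fun i => p i * w i := by
    intro w; funext i; simp [mulVec_diagonal]
  -- T2
  set T2 : ℝ := ∑ i, ∑ j, p i * β i * ((1 + c i - c i * x i) * x i) * (x i * (A i j * x j))
    with hT2def
  have hT2term : ∀ i j, 0 ≤ p i * β i * ((1 + c i - c i * x i) * x i) * (x i * (A i j * x j)) := by
    intro i j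
    have h1 : 0 ≤ 1 + c i - c i * x i := by linarith [hcx i, hc i]
    have := hp i; have := hβ i; have := hxn i; have := hxn j; have := hA i j
    positivity
  have hT2nonneg : 0 ≤ T2 :=
    Finset.sum_nonneg fun i _ => Finset.sum_nonneg fun j _ => hT2term i j
  -- main decomposition
  have hmain : 2 * (x ⬝ᵥ (Matrix.diagonal p *ᵥ
      (((1 - Matrix.diagonal c * Matrix.diagonal x) * (1 - Matrix.diagonal x) *
        (Matrix.diagonal β * A) - Matrix.diagonal γ) *ᵥ x)))
      = x ⬝ᵥ (Q *ᵥ x) - 2 * T2 := by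
    have hL : x ⬝ᵥ (Matrix.diagonal p *ᵥ
        (((1 - Matrix.diagonal c * Matrix.diagonal x) * (1 - Matrix.diagonal x) *
          (Matrix.diagonal β * A) - Matrix.diagonal γ) *ᵥ x))
        = (∑ i, ∑ j, x i * (p i * (((1 - c i * x i) * ((1 - x i) * (β i * A i j))) * x j)))
          - ∑ i, p i * γ i * (x i * x i) := by
      rw [hdiagp]
      simp only [dotProduct]
      rw [← Finset.sum_sub_distrib]
      refine Finset.sum_congr rfl fun i _ => ?_
      simp only [mulVec, dotProduct, Finset.mul_sum]
      have : ∀ j : Fin n, x i * (p i * ((((1 - Matrix.diagonal c * Matrix.diagonal x) *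
              (1 - Matrix.diagonal x) * (Matrix.diagonal β * A) - Matrix.diagonal γ) i j) * x j))
          = x i * (p i * (((1 - c i * x i) * ((1 - x i) * (β i * A i j))) * x j))
            - (if i = j then p i * γ i * (x i * x j) else 0) := by
        intro j
        rw [hMe i j]
        rcases eq_or_ne i j with h | h <;> simp [h] <;> ring
      calc ∑ j, x i * (p i * ((((1 - Matrix.diagonal c * Matrix.diagonal x) *
              (1 - Matrix.diagonal x) * (Matrix.diagonal β * A) - Matrix.diagonal γ) i j) * x j))
          = ∑ j, (x i * (p i * (((1 - c i * x i) * ((1 - x i) * (β i * A i j))) * x j))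
            - (if i = j then p i * γ i * (x i * x j) else 0)) :=
            Finset.sum_congr rfl fun j _ => this j
        _ = (∑ j, x i * (p i * (((1 - c i * x i) * ((1 - x i) * (β i * A i j))) * x j)))
            - ∑ j, (if i = j then p i * γ i * (x i * x j) else 0) := by
            rw [Finset.sum_sub_distrib]
        _ = (∑ j, x i * (p i * (((1 - c i * x i) * ((1 - x i) * (β i * A i j))) * x j)))
            - p i * γ i * (x i * x i) := by
            rw [Finset.sum_ite_eq Finset.univ i (fun j => p i * γ i * (x i * x j))]
            simp
    have hR : x ⬝ᵥ (Q *ᵥ x)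
        = (∑ i, ∑ j, 2 * (p i * β i * (x i * (A i j * x j))))
          - ∑ i, 2 * p i * γ i * (x i * x i) := by
      rw [hdot Q x x]
      have e1 : ∀ i j, x i * Q i j * x j
          = x i * (p j * β j * A j i) * x j + x i * (p i * β i * A i j) * x j
            - (if i = j then 2 * p i * γ i * (x i * x j) else 0) := by
        intro i j
        rw [hQe i j]
        by_cases h : i = j
        · subst h; simp; ring
        · simp [h]; ring
      calc ∑ i, ∑ j, x i * Q i j * x j
          = ∑ i, ∑ j, (x i * (p j * β j * A j i) * x j + x i * (p i * β i * A i j) * x j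
            - (if i = j then 2 * p i * γ i * (x i * x j) else 0)) := by
            refine Finset.sum_congr rfl fun i _ => Finset.sum_congr rfl fun j _ => e1 i j
        _ = (∑ i, ∑ j, x i * (p j * β j * A j i) * x j)
            + (∑ i, ∑ j, x i * (p i * β i * A i j) * x j)
            - ∑ i, ∑ j, (if i = j then 2 * p i * γ i * (x i * x j) else 0) := by
            simp [Finset.sum_add_distrib, Finset.sum_sub_distrib]
        _ = (∑ i, ∑ j, x i * (p i * β i * A i j) * x j)
            + (∑ i, ∑ j, x i * (p i * β i * A i j) * x j)
            - ∑ i, 2 * p i * γ i * (x i * x i) := by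
            rw [Finset.sum_comm (s := Finset.univ) (t := Finset.univ)
              (f := fun i j => x i * (p j * β j * A j i) * x j)]
            congr 1
            · congr 1
              refine Finset.sum_congr rfl fun i _ => Finset.sum_congr rfl fun j _ => by ring
            · refine Finset.sum_congr rfl fun i _ => ?_
              rw [Finset.sum_ite_eq Finset.univ i (fun j => 2 * p i * γ i * (x i * x j))]
              simp
        _ = (∑ i, ∑ j, 2 * (p i * β i * (x i * (A i j * x j))))
            - ∑ i, 2 * p i * γ i * (x i * x i) := by
            rw [← Finset.sum_add_distrib]
            congr 1
            refine Finset.sum_congr rfl fun i _ => ?_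
            rw [← Finset.sum_add_distrib]
            refine Finset.sum_congr rfl fun j _ => by ring
    rw [hL, hR]
    have hS : 2 * (∑ i, ∑ j, x i * (p i * (((1 - c i * x i) * ((1 - x i) * (β i * A i j))) * x j)))
        = (∑ i, ∑ j, 2 * (p i * β i * (x i * (A i j * x j)))) - 2 * T2 := by
      rw [hT2def, Finset.mul_sum, Finset.mul_sum, ← Finset.sum_sub_distrib]
      refine Finset.sum_congr rfl fun i _ => ?_
      rw [Finset.mul_sum, Finset.mul_sum, ← Finset.sum_sub_distrib]
      refine Finset.sum_congr rfl fun j _ => by ring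
    have hG : 2 * (∑ i, p i * γ i * (x i * x i)) = ∑ i, 2 * p i * γ i * (x i * x i) := by
      rw [Finset.mul_sum]
      exact Finset.sum_congr rfl fun i _ => by ring
    linarith [hS, hG]
  rw [hmain]
  -- suppose not
  by_contra hcon
  push_neg at hcon
  have hQxx : x ⬝ᵥ (Q *ᵥ x) ≤ 0 := hnsd x
  have hQx0 : x ⬝ᵥ (Q *ᵥ x) = 0 := by linarith
  have hT20 : T2 = 0 := by linarith
  -- from T2 = 0 : no edges within the support of x
  have hzero : ∀ i j, 0 < x i → 0 < x j → A i j = 0 := by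
    intro i j hxi hxj
    have hterm : p i * β i * ((1 + c i - c i * x i) * x i) * (x i * (A i j * x j)) = 0 := by
      have h1 := (Finset.sum_eq_zero_iff_of_nonneg
        (fun i _ => Finset.sum_nonneg fun j _ => hT2term i j)).1 hT20 i (Finset.mem_univ i)
      exact (Finset.sum_eq_zero_iff_of_nonneg (fun j _ => hT2term i j)).1 h1 j (Finset.mem_univ j)
    by_contra hne
    have hApos : 0 < A i j := lt_of_le_of_ne (hA i j) (Ne.symm hne)
    have h1 : 0 < 1 + c i - c i * x i := by linarith [hcx i, hc i]
    have hprod : 0 < p i * β i * ((1 + c i - c i * x i) * x i) * (x i * (A i j * x j)) :=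
      mul_pos (mul_pos (mul_pos (hp i) (hβ i)) (mul_pos h1 hxi))
        (mul_pos hxi (mul_pos hApos hxj))
    linarith [hterm, hprod]
  -- kernel : Q *ᵥ x = 0
  have hker : ∀ v : Fin n → ℝ, v ⬝ᵥ (Q *ᵥ x) = 0 := by
    intro v
    have ha : v ⬝ᵥ (Q *ᵥ v) ≤ 0 := hnsd v
    set a := v ⬝ᵥ (Q *ᵥ v) with hadef
    set b := v ⬝ᵥ (Q *ᵥ x) with hbdef
    have h1a : (0:ℝ) < 1 - a := by linarith
    set t : ℝ := b / (1 - a) with htdef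
    have htb : t * (1 - a) = b := div_mul_cancel₀ b (ne_of_gt h1a)
    have hcomb := hnsd (x + t • v)
    rw [mulVec_add, mulVec_smul, dotProduct_add, add_dotProduct, add_dotProduct,
      dotProduct_smul, smul_dotProduct, smul_dotProduct, dotProduct_smul] at hcomb
    simp only [smul_eq_mul] at hcomb
    rw [hQx0, hsymdot x v] at hcomb
    rw [← hbdef, ← hadef] at hcomb
    -- hcomb : 0 + (t * b + (t * b + t * (t * a))) ≤ 0
    nlinarith [hcomb, sq_nonneg t, h1a]
  have hkerc : ∀ k, ∑ j, Q k j * x j = 0 := by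
    intro k
    have h := hker (Pi.single k 1)
    rw [hdot] at h
    simp only [Pi.single_apply] at h
    rw [Finset.sum_eq_single k] at h
    · simpa using h
    · intro b _ hb; simp [hb]
    · intro hk; exact absurd (Finset.mem_univ k) hk
  -- support of x
  obtain ⟨k0, hk0⟩ : ∃ k, 0 < x k := by
    by_contra hno
    push_neg at hno
    apply hx0
    funext i
    exact le_antisymm (hno i) (hxn i)
  by_cases hall : ∀ j, 0 < x j
  · -- A is identically zero on the support = everything ; contradict irreducibility
    have hA0 : ∀ i j, A i j = 0 := fun i j => hzero i j (hall i) (hall j)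
    have h0n : (0 : ℕ) < n := by omega
    obtain ⟨i, hiS, j, hjS, hij⟩ := hirr {(⟨0, h0n⟩ : Fin n)} ⟨⟨0, h0n⟩, rfl⟩
      (by
        intro h
        have h1 : (⟨1, by omega⟩ : Fin n) ∈ ({(⟨0, h0n⟩ : Fin n)} : Set (Fin n)) := by
          rw [h]; trivial
        simp at h1)
    rw [hA0 i j] at hij
    exact lt_irrefl 0 hij
  · push_neg at hall
    obtain ⟨j0, hj0⟩ := hall
    set S : Set (Fin n) := {i | 0 < x i} with hSdef
    have hj0n : j0 ∉ S := by
      simp only [hSdef, Set.mem_setOf_eq]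
      exact not_lt.2 hj0
    obtain ⟨i, hiS, j, hjS, hij⟩ := hirr S ⟨k0, hk0⟩
      (by intro h; exact hj0n (h.symm ▸ Set.mem_univ j0))
    have hxi : 0 < x i := hiS
    have hxj : x j = 0 := le_antisymm (not_lt.1 hjS) (hxn j)
    -- each term of ∑ m, Q j m * x m is nonneg
    have hterm_nonneg : ∀ m, 0 ≤ Q j m * x m := by
      intro m
      rcases lt_or_eq_of_le (hxn m) with hm | hm
      · have hmj : m ≠ j := by
          intro h; subst h; exact hjS hm
        rw [hQe j m, if_neg (fun h : j = m => hmj h.symm), sub_zero]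
        exact mul_nonneg
          (add_nonneg
            (mul_nonneg (mul_nonneg (hp m).le (hβ m).le) (hA m j))
            (mul_nonneg (mul_nonneg (hp j).le (hβ j).le) (hA j m))) hm.le
      · rw [← hm]; simp
    have hterm0 : Q j i * x i = 0 :=
      (Finset.sum_eq_zero_iff_of_nonneg (fun m _ => hterm_nonneg m)).1 (hkerc j) i
        (Finset.mem_univ i)
    have hji : i ≠ j := fun h => hjS (h ▸ hiS)
    rw [hQe j i, if_neg (fun h : j = i => hji h.symm), sub_zero] at hterm0
    have h1 : 0 < p i * β i * A i j := mul_pos (mul_pos (hp i) (hβ i)) hij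
    have h2 : 0 ≤ p j * β j * A j i :=
      mul_nonneg (mul_nonneg (hp j).le (hβ j).le) (hA j i)
    have hprod : 0 < (p i * β i * A i j + p j * β j * A j i) * x i :=
      mul_pos (by linarith) hxi
    linarith [hterm0, hprod]
end

section
/- Fixed-point reformulation of endemic equilibria: Assume A is irreducible and fix c > 0. For every x ∈ ℝⁿ with 0 < x_i ≤ 1/c_i for all i: (a) for each i the denominator γ_i/(c+γ_i) + (1+c_i)u_i(x) − c_i u_i(x) x_i is strictly positive, so f_i(x) is well defined; and (b) x satisfies β_i (1 − c_i x_i)(1 − x_i) ∑_{j=1}^n A_{ij} x_j = γ_i x_i for all i if and only if x_i = f_i(x) for all i. -/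
open Matrix

/-- u_i(x) = β_i (∑_j A_{ij} x_j)/(c + γ_i). -/
noncomputable def uFun {n : ℕ} (A : Matrix (Fin n) (Fin n) ℝ) (β γ : Fin n → ℝ)
    (cc : ℝ) (x : Fin n → ℝ) (i : Fin n) : ℝ :=
  β i * (∑ j, A i j * x j) / (cc + γ i)

/-- The denominator γ_i/(c+γ_i) + (1+c_i)u_i(x) − c_i u_i(x) x_i. -/
noncomputable def denomFun {n : ℕ} (A : Matrix (Fin n) (Fin n) ℝ) (β γ c : Fin n → ℝ)
    (cc : ℝ) (x : Fin n → ℝ) (i : Fin n) : ℝ :=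
  γ i / (cc + γ i) + (1 + c i) * uFun A β γ cc x i - c i * uFun A β γ cc x i * x i

/-- The fixed-point map f_i(x). -/
noncomputable def fFun {n : ℕ} (A : Matrix (Fin n) (Fin n) ℝ) (β γ c : Fin n → ℝ)
    (cc : ℝ) (x : Fin n → ℝ) (i : Fin n) : ℝ :=
  uFun A β γ cc x i / denomFun A β γ c cc x i

theorem stmt10 {n : ℕ} (hn : 2 ≤ n) (A : Matrix (Fin n) (Fin n) ℝ)
    (hA : ∀ i j, 0 ≤ A i j) (hirr : MatIrreducible A)
    (β γ c : Fin n → ℝ)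
    (hβ : ∀ i, 0 < β i) (hγ : ∀ i, 0 ≤ γ i) (hc : ∀ i, 1 < c i)
    (cc : ℝ) (hcc : 0 < cc)
    (x : Fin n → ℝ) (hx : ∀ i, 0 < x i ∧ x i ≤ 1 / c i) :
    (∀ i, 0 < denomFun A β γ c cc x i) ∧
    ((∀ i, β i * (1 - c i * x i) * (1 - x i) * (∑ j, A i j * x j) = γ i * x i) ↔
      (∀ i, x i = fFun A β γ c cc x i)) := by
  have hpos : ∀ i : Fin n, 0 < cc + γ i := fun i => by linarith [hγ i]
  have hsum : ∀ i : Fin n, 0 < ∑ j, A i j * x j := by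
    intro i
    obtain ⟨i', hi', j, hj, hAij⟩ := hirr {i} ⟨i, rfl⟩ (by
      intro h
      have h2 : ∀ k : Fin n, k = i := fun k => by
        have : k ∈ ({i} : Set (Fin n)) := h.symm ▸ Set.mem_univ k
        exact this
      have : (⟨0, by omega⟩ : Fin n) = (⟨1, by omega⟩ : Fin n) :=
        (h2 _).trans (h2 _).symm
      simp at this)
    rw [Set.mem_singleton_iff] at hi'
    rw [hi'] at hAij
    exact Finset.sum_pos' (fun k _ => mul_nonneg (hA i k) (hx k).1.le)
      ⟨j, Finset.mem_univ j, mul_pos hAij (hx j).1⟩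
  have hu : ∀ i : Fin n, 0 < uFun A β γ cc x i := fun i =>
    div_pos (mul_pos (hβ i) (hsum i)) (hpos i)
  have hx1 : ∀ i : Fin n, x i < 1 := by
    intro i
    have := (hx i).2
    have h1 : 1 / c i < 1 := by
      rw [div_lt_one (by linarith [hc i])]; linarith [hc i]
    linarith
  have hd : ∀ i : Fin n, 0 < denomFun A β γ c cc x i := by
    intro i
    unfold denomFun
    have h0 : 0 ≤ γ i / (cc + γ i) := div_nonneg (hγ i) (hpos i).le
    have h1 : 0 < uFun A β γ cc x i * (1 + c i * (1 - x i)) :=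
      mul_pos (hu i) (by nlinarith [hc i, hx1 i])
    nlinarith [h0, h1]
  refine ⟨hd, ?_⟩
  have key : ∀ i : Fin n,
      uFun A β γ cc x i - x i * denomFun A β γ c cc x i =
      (β i * (1 - c i * x i) * (1 - x i) * (∑ j, A i j * x j) - γ i * x i) / (cc + γ i) := by
    intro i
    unfold denomFun uFun
    field_simp
    ring
  constructor
  · intro h i
    have hk := key i
    rw [h i, sub_self, zero_div] at hk
    rw [fFun, eq_div_iff (hd i).ne']
    linarith [hk]
  · intro h i
    have hk := key i
    have hx' : x i * denomFun A β γ c cc x i = uFun A β γ cc x i := by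
      rw [h i, fFun, div_mul_cancel₀ _ (hd i).ne']
    rw [hx', sub_self] at hk
    have := (div_eq_zero_iff.mp hk.symm).resolve_right (hpos i).ne'
    linarith [this]
end

section
/- Strict monotonicity of the fixed-point map: Assume A is irreducible and fix c > 0. If x, y ∈ ℝⁿ satisfy 0 < x_j < y_j ≤ 1/c_j for all j ∈ {1,…,n}, then f_i(x) < f_i(y) for every i ∈ {1,…,n}. -/
open Matrix

theorem stmt11 {n : ℕ} (hn : 2 ≤ n) (A : Matrix (Fin n) (Fin n) ℝ)
    (hA : ∀ i j, 0 ≤ A i j) (hirr : MatIrreducible A)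
    (β γ c : Fin n → ℝ)
    (hβ : ∀ i, 0 < β i) (hγ : ∀ i, 0 ≤ γ i) (hc : ∀ i, 1 < c i)
    (cc : ℝ) (hcc : 0 < cc)
    (x y : Fin n → ℝ)
    (hxy : ∀ j, 0 < x j ∧ x j < y j ∧ y j ≤ 1 / c j) :
    ∀ i, fFun A β γ c cc x i < fFun A β γ c cc y i := by
  intro i
  haveI : Nontrivial (Fin n) := Fin.nontrivial_iff_two_le.mpr hn
  -- row i has a positive entry
  obtain ⟨i', hi', j₀, hj₀, hAij⟩ := hirr {i} ⟨i, rfl⟩ (by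
    obtain ⟨k, hk⟩ := exists_ne i
    intro h
    have : k ∈ ({i} : Set (Fin n)) := h ▸ Set.mem_univ k
    exact hk this)
  rw [show i' = i from hi'] at hAij
  have hcg : 0 < cc + γ i := by have := hγ i; linarith
  have hcpos : 0 < c i := lt_trans one_pos (hc i)
  have hux : 0 < uFun A β γ cc x i := by
    unfold uFun
    apply div_pos _ hcg
    apply mul_pos (hβ i)
    apply Finset.sum_pos'
    · exact fun j _ => mul_nonneg (hA i j) (hxy j).1.le
    · exact ⟨j₀, Finset.mem_univ j₀, mul_pos hAij (hxy j₀).1⟩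
  have huxy : uFun A β γ cc x i < uFun A β γ cc y i := by
    unfold uFun
    apply div_lt_div_of_pos_right _ hcg
    apply mul_lt_mul_of_pos_left _ (hβ i)
    exact Finset.sum_lt_sum
      (fun j _ => mul_le_mul_of_nonneg_left (hxy j).2.1.le (hA i j))
      ⟨j₀, Finset.mem_univ j₀, mul_lt_mul_of_pos_left (hxy j₀).2.1 hAij⟩
  have huy : 0 < uFun A β γ cc y i := lt_trans hux huxy
  have hgnn : 0 ≤ γ i / (cc + γ i) := div_nonneg (hγ i) hcg.le
  have hcy1 : c i * y i ≤ 1 := by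
    have h := (hxy i).2.2
    rw [le_div_iff₀ hcpos] at h
    linarith [h]
  have hcx1 : c i * x i < 1 := by
    have := mul_lt_mul_of_pos_left (hxy i).2.1 hcpos
    linarith
  set ux := uFun A β γ cc x i
  set uy := uFun A β γ cc y i
  have hdx : 0 < denomFun A β γ c cc x i := by
    unfold denomFun
    have : 0 < ux * (1 + c i - c i * x i) := mul_pos hux (by linarith)
    nlinarith [this]
  have hdy : 0 < denomFun A β γ c cc y i := by
    unfold denomFun
    have : 0 < uy * (1 + c i - c i * y i) := mul_pos huy (by nlinarith)
    nlinarith [this]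
  unfold fFun
  rw [div_lt_div_iff₀ hdx hdy]
  unfold denomFun
  have h1 : 0 ≤ (uy - ux) * (γ i / (cc + γ i)) := mul_nonneg (by linarith) hgnn
  have h2 : 0 < c i * (ux * uy) * (y i - x i) :=
    mul_pos (mul_pos hcpos (mul_pos hux huy)) (by linarith [(hxy i).2.1])
  nlinarith [h1, h2]
end

section
/- Spectral translation: Assume A is irreducible, B = diag(β_1,…,β_n) with β_i > 0, and Γ̄ = diag(g_1,…,g_n) with g_i > 0. If s(BA − Γ̄) > 0, then s(Γ̄⁻¹BA) > 1. -/
open Matrix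

/-!
An eigenvector `w` of `BA - Γ̄` for an eigenvalue `ν` with `Re ν > 0` satisfies
`(ν + g i) w i = (BA w) i`, so taking moduli gives `(Re ν + g i) |w i| ≤ (BA |w|) i`.
As there are finitely many `g i > 0`, `Re ν ≥ δ g i` for some `δ > 0`, hence
`Γ̄⁻¹BA |w| ≥ (1 + δ) |w|`.
For a nonnegative irreducible matrix such a nonnegative vector `|w| ≠ 0` forces a real
eigenvalue `r ≥ 1 + δ` (Collatz–Wielandt), and `r ≤ s(Γ̄⁻¹BA)`.
-/

open Finset Filter Topology

section NonnegMatrix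

variable {n : ℕ} {C : Matrix (Fin n) (Fin n) ℝ}

lemma mulVec_nonneg_of_nonneg (hC : ∀ i j, 0 ≤ C i j) {x : Fin n → ℝ} (hx : 0 ≤ x) :
    0 ≤ C *ᵥ x := fun i => by
  simpa only [mulVec, dotProduct, Pi.zero_apply] using
    sum_nonneg fun j _ => mul_nonneg (hC i j) (hx j)

lemma exists_pos_of_nonneg_of_ne_zero {x : Fin n → ℝ} (hx : 0 ≤ x) (hx0 : x ≠ 0) :
    ∃ j, 0 < x j := by
  by_contra! h
  exact hx0 (le_antisymm h hx)

lemma mulVec_apply_pos (hC : ∀ i j, 0 ≤ C i j) {x : Fin n → ℝ} (hx : 0 ≤ x) {i j : Fin n}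
    (hCij : 0 < C i j) (hj : 0 < x j) : 0 < (C *ᵥ x) i :=
  sum_pos' (fun k _ => mul_nonneg (hC i k) (hx k)) ⟨j, mem_univ j, mul_pos hCij hj⟩

lemma one_add_mulVec (x : Fin n → ℝ) : (1 + C) *ᵥ x = x + C *ᵥ x := by
  rw [add_mulVec, one_mulVec]

/-- Irreducibility provides an index outside the support of `x` with an edge into it. -/
lemma MatIrreducible.card_pos_lt_card_pos_one_add_mulVec (hC : ∀ i j, 0 ≤ C i j)
    (hirr : MatIrreducible C) {x : Fin n → ℝ} (hx : 0 ≤ x) (hx0 : x ≠ 0)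
    (hnot : ¬ ∀ i, 0 < x i) :
    #{i | 0 < x i} < #{i | 0 < ((1 + C) *ᵥ x) i} := by
  obtain ⟨i, hi, j, hj, hCij⟩ := hirr {i | 0 < x i}ᶜ (by simpa [Set.Nonempty] using hnot)
    (by simpa [Set.eq_empty_iff_forall_notMem] using exists_pos_of_nonneg_of_ne_zero hx hx0)
  simp only [Set.mem_compl_iff, Set.mem_ofPred_eq, not_not] at hi hj
  have hCx : 0 ≤ C *ᵥ x := mulVec_nonneg_of_nonneg hC hx
  have hpos : 0 < ((1 + C) *ᵥ x) i := by
    rw [one_add_mulVec]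
    exact add_pos_of_nonneg_of_pos (hx i) (mulVec_apply_pos hC hx hCij hj)
  refine card_lt_card
    ⟨fun k hk => ?_, fun hsub => hi (by simpa using hsub (by simpa using hpos))⟩
  simp only [mem_filter, mem_univ, true_and, one_add_mulVec] at hk ⊢
  exact add_pos_of_pos_of_nonneg hk (hCx k)

lemma MatIrreducible.one_add_pow_mulVec_pos (hC : ∀ i j, 0 ≤ C i j) (hirr : MatIrreducible C)
    {x : Fin n → ℝ} (hx : 0 ≤ x) (hx0 : x ≠ 0) (i : Fin n) :
    0 < ((1 + C) ^ (n - 1) *ᵥ x) i := by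
  set y : ℕ → Fin n → ℝ := fun k => (1 + C) ^ k *ᵥ x
  have hy_succ (k : ℕ) : y (k + 1) = y k + C *ᵥ y k := by
    simp only [y, pow_succ', ← mulVec_mulVec, one_add_mulVec]
  have hx_le (k : ℕ) : x ≤ y k := by
    induction k with
    | zero => simp [y]
    | succ k ih =>
      rw [hy_succ]
      exact ih.trans (le_add_of_nonneg_right (mulVec_nonneg_of_nonneg hC (hx.trans ih)))
  have hy (k : ℕ) : 0 ≤ y k := hx.trans (hx_le k)
  have hy0 (k : ℕ) : y k ≠ 0 := fun h => hx0 (le_antisymm (h ▸ hx_le k) hx)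
  have hcard (k : ℕ) : min (k + 1) n ≤ #{i | 0 < y k i} := by
    induction k with
    | zero =>
      obtain ⟨j, hj⟩ := exists_pos_of_nonneg_of_ne_zero (hy 0) (hy0 0)
      have : 0 < #{i | 0 < y 0 i} := card_pos.2 ⟨j, by simpa using hj⟩
      omega
    | succ k ih =>
      by_cases hall : ∀ i, 0 < y k i
      · have hall' : ∀ i ∈ univ, 0 < y (k + 1) i := fun i _ =>
          (hall i).trans_le ((hy_succ k).symm ▸ le_add_of_nonneg_right
            (mulVec_nonneg_of_nonneg hC (hy k)) i)
        have := (card_filter_eq_iff.2 hall').trans (card_fin n)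
        omega
      · have := hirr.card_pos_lt_card_pos_one_add_mulVec hC (hy k) (hy0 k) hall
        rw [one_add_mulVec, ← hy_succ] at this
        omega
  have hfull : #{i | 0 < y (n - 1) i} = #(univ : Finset (Fin n)) := by
    have := hcard (n - 1)
    have := card_filter_le univ (fun i => 0 < y (n - 1) i)
    have : 0 < n := i.pos
    rw [card_fin] at *
    omega
  exact card_filter_eq_iff.1 hfull i (mem_univ i)

end NonnegMatrix

lemma exists_pos_mul_lt_of_pos {ι : Type*} [Finite ι] (z : ι → ℝ) {w : ι → ℝ}
    (hw : ∀ i, 0 < w i) : ∃ ε > 0, ∀ i, ε * z i < w i := by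
  have hsmall : ∀ᶠ ε in 𝓝 (0 : ℝ), ∀ i, ε * z i < w i := eventually_all.2 fun i =>
    (continuous_mul_const (z i)).tendsto' 0 0 (zero_mul _) |>.eventually_lt_const (hw i)
  have hpos : ∀ᶠ ε in 𝓝[>] (0 : ℝ), 0 < ε := self_mem_nhdsWithin
  exact (hpos.and (nhdsWithin_le_nhds hsmall)).exists

section CollatzWielandt

variable {n : ℕ} {N : Matrix (Fin n) (Fin n) ℝ}

lemma inv_sum_smul_mem_stdSimplex {y : Fin n → ℝ} (hy : 0 ≤ y) (hy0 : y ≠ 0) :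
    (∑ i, y i)⁻¹ • y ∈ stdSimplex ℝ (Fin n) := by
  obtain ⟨j, hj⟩ := exists_pos_of_nonneg_of_ne_zero hy hy0
  have hsum : 0 < ∑ i, y i := sum_pos' (fun i _ => hy i) ⟨j, mem_univ j, hj⟩
  refine ⟨fun i => mul_nonneg (inv_nonneg.2 hsum.le) (hy i), ?_⟩
  simp only [Pi.smul_apply, smul_eq_mul, ← mul_sum, inv_mul_cancel₀ hsum.ne']

lemma le_sum_sum_of_smul_le_mulVec (hN : ∀ i j, 0 ≤ N i j) {r : ℝ} {y : Fin n → ℝ}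
    (hy : y ∈ stdSimplex ℝ (Fin n)) (hr : r • y ≤ N *ᵥ y) : r ≤ ∑ i, ∑ j, N i j :=
  calc r = ∑ i, r * y i := by rw [← mul_sum, hy.2, mul_one]
    _ ≤ ∑ i, (N *ᵥ y) i := sum_le_sum fun i _ => hr i
    _ = ∑ i, ∑ j, N i j * y j := rfl
    _ ≤ ∑ i, ∑ j, N i j := sum_le_sum fun i _ => sum_le_sum fun j _ =>
        mul_le_of_le_one_right (hN i j) (mem_Icc_of_mem_stdSimplex hy j).2

/-- Collatz–Wielandt: the largest `r` with `r • y ≤ N *ᵥ y` for some `y` in the simplex is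
attained, and it is an eigenvalue, since otherwise applying the positive matrix `(1 + N) ^ (n - 1)`
to the slack `N *ᵥ y - r • y` would allow a larger `r`. -/
theorem MatIrreducible.exists_eigenvalue_ge (hN : ∀ i j, 0 ≤ N i j) (hirr : MatIrreducible N)
    {c : ℝ} {x : Fin n → ℝ} (hx : 0 ≤ x) (hx0 : x ≠ 0) (hcx : c • x ≤ N *ᵥ x) :
    ∃ r, c ≤ r ∧ ∃ y ≠ 0, N *ᵥ y = r • y := by
  set K : Set (ℝ × (Fin n → ℝ)) :=
    {p | c ≤ p.1 ∧ p.2 ∈ stdSimplex ℝ (Fin n) ∧ p.1 • p.2 ≤ N *ᵥ p.2}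
  have mem_K {r : ℝ} {y : Fin n → ℝ} (hr : c ≤ r) (hy : 0 ≤ y) (hy0 : y ≠ 0)
      (hry : r • y ≤ N *ᵥ y) : (r, (∑ i, y i)⁻¹ • y) ∈ K := by
    have hs : 0 ≤ (∑ i, y i)⁻¹ := inv_nonneg.2 (sum_nonneg fun i _ => hy i)
    refine ⟨hr, inv_sum_smul_mem_stdSimplex hy hy0, ?_⟩
    rw [mulVec_smul, smul_comm]
    exact smul_le_smul_of_nonneg_left hry hs
  have hK : IsCompact K := by
    refine (isCompact_Icc.prod (isCompact_stdSimplex ℝ (Fin n))).of_isClosed_subset ?_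
      fun p hp => ⟨⟨hp.1, le_sum_sum_of_smul_le_mulVec hN hp.2.1 hp.2.2⟩, hp.2.1⟩
    exact (isClosed_le continuous_const continuous_fst).inter
      (((isClosed_stdSimplex ℝ (Fin n)).preimage continuous_snd).inter
        (isClosed_le (by fun_prop) (continuous_const.matrix_mulVec continuous_snd)))
  obtain ⟨⟨r, y⟩, ⟨hcr, hy, hry⟩, hmax⟩ :=
    hK.exists_isMaxOn ⟨_, mem_K le_rfl hx hx0 hcx⟩ continuous_fst.continuousOn
  have hy0 : y ≠ 0 := by rintro rfl; simpa using hy.2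
  refine ⟨r, hcr, y, hy0, ?_⟩
  by_contra hne
  set P := (1 + N) ^ (n - 1)
  have hslack : 0 ≤ N *ᵥ y - r • y := sub_nonneg.2 hry
  obtain ⟨ε, hε, hεP⟩ := exists_pos_mul_lt_of_pos (P *ᵥ y)
    (hirr.one_add_pow_mulVec_pos hN hslack (sub_ne_zero.2 hne))
  have hPy : (r + ε) • (P *ᵥ y) ≤ N *ᵥ (P *ᵥ y) := by
    have hcomm : N * P = P * N := ((Commute.one_right N).add_right (Commute.refl N)).pow_right _
    intro i
    have := (hεP i).le
    rw [mulVec_sub, mulVec_mulVec, ← hcomm, ← mulVec_mulVec, mulVec_smul] at this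
    simp only [Pi.smul_apply, Pi.sub_apply, smul_eq_mul] at this ⊢
    linarith
  obtain ⟨j, -⟩ := exists_pos_of_nonneg_of_ne_zero hy.1 hy0
  have hPy0 : ∀ i, 0 < (P *ᵥ y) i := hirr.one_add_pow_mulVec_pos hN hy.1 hy0
  have hle : r + ε ≤ r := hmax (mem_K (hcr.trans (le_add_of_nonneg_right hε.le))
    (fun i => (hPy0 i).le) (fun h => (hPy0 j).ne' (congrFun h j)) hPy)
  linarith

end CollatzWielandt

section Spectrum

variable {ι K : Type*} [Fintype ι] [DecidableEq ι] [Field K] {A : Matrix ι ι K} {μ : K}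

lemma Matrix.exists_mulVec_eq_smul_of_mem_spectrum (h : μ ∈ spectrum K A) :
    ∃ v ≠ 0, A *ᵥ v = μ • v := by
  rw [← spectrum_toLin', ← Module.End.hasEigenvalue_iff_mem_spectrum] at h
  obtain ⟨v, hv, hv0⟩ := h.exists_hasEigenvector
  exact ⟨v, hv0, by simpa using Module.End.mem_eigenspace_iff.1 hv⟩

lemma Matrix.mem_spectrum_of_mulVec_eq_smul {v : ι → K} (hv0 : v ≠ 0) (h : A *ᵥ v = μ • v) :
    μ ∈ spectrum K A := by
  rw [← spectrum_toLin']
  exact Module.End.HasEigenvalue.mem_spectrum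
    (Module.End.hasEigenvalue_of_hasEigenvector ⟨Module.End.mem_eigenspace_iff.2 (by simpa), hv0⟩)

end Spectrum

section SpectralAbscissa

variable {n : ℕ} {M : Matrix (Fin n) (Fin n) ℝ}

lemma exists_lt_re_of_lt_specAbs {t : ℝ} (ht : 0 ≤ t) (h : t < specAbs M) :
    ∃ ν ∈ spectrum ℂ (M.map (Complex.ofReal ·)), t < ν.re := by
  by_contra! hle
  exact h.not_ge (Real.sSup_le (by simpa using hle) ht)

lemma le_specAbs_of_mulVec_eq_smul {r : ℝ} {y : Fin n → ℝ} (hy0 : y ≠ 0) (h : M *ᵥ y = r • y) :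
    r ≤ specAbs M := by
  have hmem : (r : ℂ) ∈ spectrum ℂ (M.map (Complex.ofReal ·)) := by
    refine Matrix.mem_spectrum_of_mulVec_eq_smul (v := (↑) ∘ y) ?_ ?_
    · exact fun h0 => hy0 (funext fun i => by simpa using congrFun h0 i)
    · ext i
      exact (Complex.ofRealHom.map_mulVec M y i).symm.trans (by simp [h])
  exact le_csSup ((Matrix.finite_spectrum _).image _).bddAbove ⟨_, hmem, Complex.ofReal_re r⟩

end SpectralAbscissa

section Diagonal

variable {n : ℕ} {d : Fin n → ℝ} {A : Matrix (Fin n) (Fin n) ℝ}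

lemma diagonal_mul_nonneg (hd : ∀ i, 0 ≤ d i) (hA : ∀ i j, 0 ≤ A i j) (i j : Fin n) :
    0 ≤ (diagonal d * A) i j := by
  rw [diagonal_mul]
  exact mul_nonneg (hd i) (hA i j)

lemma MatIrreducible.diagonal_mul (hd : ∀ i, 0 < d i) (hA : MatIrreducible A) :
    MatIrreducible (diagonal d * A) := fun S hS hSu => by
  obtain ⟨i, hi, j, hj, hij⟩ := hA S hS hSu
  exact ⟨i, hi, j, hj, by rw [Matrix.diagonal_mul]; exact mul_pos (hd i) hij⟩

lemma inv_diagonal_of_ne_zero (hd : ∀ i, d i ≠ 0) : (diagonal d)⁻¹ = diagonal d⁻¹ := by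
  refine inv_eq_left_inv ?_
  rw [diagonal_mul_diagonal, ← diagonal_one]
  exact congrArg diagonal (funext fun i => inv_mul_cancel₀ (hd i))

end Diagonal

lemma norm_mul_norm_le_mulVec_norm_s13 {ι : Type*} [Fintype ι] {M : Matrix ι ι ℝ}
    (hM : ∀ i j, 0 ≤ M i j) {w : ι → ℂ} {z : ℂ} {i : ι}
    (h : (M.map (Complex.ofReal ·) *ᵥ w) i = z * w i) :
    ‖z‖ * ‖w i‖ ≤ (M *ᵥ fun j => ‖w j‖) i :=
  calc ‖z‖ * ‖w i‖ = ‖∑ j, (M i j : ℂ) * w j‖ := by rw [← norm_mul, ← h]; rfl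
    _ ≤ ∑ j, ‖(M i j : ℂ) * w j‖ := norm_sum_le _ _
    _ = (M *ᵥ fun j => ‖w j‖) i := sum_congr rfl fun j _ => by
        rw [norm_mul, Complex.norm_real, Real.norm_of_nonneg (hM i j)]

lemma re_add_mul_norm_le_mulVec_norm {ι : Type*} [Fintype ι] [DecidableEq ι] {M : Matrix ι ι ℝ}
    (hM : ∀ i j, 0 ≤ M i j) {g : ι → ℝ} {w : ι → ℂ} {ν : ℂ}
    (h : (M - diagonal g).map (Complex.ofReal ·) *ᵥ w = ν • w) (i : ι) :
    (ν.re + g i) * ‖w i‖ ≤ (M *ᵥ fun j => ‖w j‖) i := by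
  have hi : (M.map (Complex.ofReal ·) *ᵥ w) i = (ν + g i) * w i := by
    have := congrFun h i
    rw [Matrix.map_sub _ Complex.ofReal_sub, diagonal_map Complex.ofReal_zero, sub_mulVec,
      Pi.sub_apply, mulVec_diagonal] at this
    simp only [Pi.smul_apply, smul_eq_mul] at this
    linear_combination this
  calc (ν.re + g i) * ‖w i‖ = (ν + g i).re * ‖w i‖ := by simp
    _ ≤ ‖ν + g i‖ * ‖w i‖ := mul_le_mul_of_nonneg_right (Complex.re_le_norm _) (norm_nonneg _)
    _ ≤ (M *ᵥ fun j => ‖w j‖) i := norm_mul_norm_le_mulVec_norm_s13 hM hi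

theorem stmt13_general {n : ℕ} (A : Matrix (Fin n) (Fin n) ℝ)
    (hA : ∀ i j, 0 ≤ A i j) (hirr : MatIrreducible A)
    (β g : Fin n → ℝ) (hβ : ∀ i, 0 < β i) (hg : ∀ i, 0 < g i)
    (hs : 0 < specAbs (Matrix.diagonal β * A - Matrix.diagonal g)) :
    1 < specAbs ((Matrix.diagonal g)⁻¹ * (Matrix.diagonal β * A)) := by
  rw [inv_diagonal_of_ne_zero fun i => (hg i).ne']
  set M := diagonal β * A
  have hM : ∀ i j, 0 ≤ M i j := diagonal_mul_nonneg (fun i => (hβ i).le) hA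
  obtain ⟨ν, hν, hνre⟩ := exists_lt_re_of_lt_specAbs le_rfl hs
  obtain ⟨w, hw0, hw⟩ := exists_mulVec_eq_smul_of_mem_spectrum hν
  obtain ⟨δ, hδ, hδg⟩ := exists_pos_mul_lt_of_pos g fun _ => hνre
  set x : Fin n → ℝ := fun j => ‖w j‖
  have hx0 : x ≠ 0 := fun h => hw0 (funext fun j => norm_eq_zero.1 (congrFun h j))
  have hNx : (1 + δ) • x ≤ (diagonal g⁻¹ * M) *ᵥ x := fun i => by
    rw [← mulVec_mulVec, mulVec_diagonal, Pi.smul_apply, smul_eq_mul, Pi.inv_apply,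
      le_inv_mul_iff₀ (hg i)]
    calc g i * ((1 + δ) * x i) ≤ (ν.re + g i) * x i := by
          nlinarith [hδg i, norm_nonneg (w i)]
      _ ≤ (M *ᵥ x) i := re_add_mul_norm_le_mulVec_norm hM hw i
  obtain ⟨r, hr, y, hy0, hy⟩ := ((hirr.diagonal_mul hβ).diagonal_mul fun i => inv_pos.2 (hg i))
    |>.exists_eigenvalue_ge (diagonal_mul_nonneg (fun i => (inv_pos.2 (hg i)).le) hM)
      (fun j => norm_nonneg (w j)) hx0 hNx
  calc 1 < 1 + δ := lt_add_of_pos_right 1 hδ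
    _ ≤ r := hr
    _ ≤ _ := le_specAbs_of_mulVec_eq_smul hy0 hy

theorem stmt13 {n : ℕ} (hn : 2 ≤ n) (A : Matrix (Fin n) (Fin n) ℝ)
    (hA : ∀ i j, 0 ≤ A i j) (hirr : MatIrreducible A)
    (β g : Fin n → ℝ) (hβ : ∀ i, 0 < β i) (hg : ∀ i, 0 < g i)
    (hs : 0 < specAbs (Matrix.diagonal β * A - Matrix.diagonal g)) :
    1 < specAbs ((Matrix.diagonal g)⁻¹ * (Matrix.diagonal β * A)) :=
  stmt13_general A hA hirr β g hβ hg hs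
end

section
/- Uniqueness of equilibria in the threshold box: Assume A is irreducible. If x, y ∈ ℝⁿ both satisfy 0 < x_i ≤ 1/c_i, 0 < y_i ≤ 1/c_i, β_i (1 − c_i x_i)(1 − x_i) ∑_{j=1}^n A_{ij} x_j = γ_i x_i, and β_i (1 − c_i y_i)(1 − y_i) ∑_{j=1}^n A_{ij} y_j = γ_i y_i for every i ∈ {1,…,n}, then x = y. -/
open Matrix

lemma stmt15_aux {n : ℕ} (hn : 2 ≤ n) (A : Matrix (Fin n) (Fin n) ℝ)
    (hA : ∀ i j, 0 ≤ A i j) (hirr : MatIrreducible A)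
    (β γ c : Fin n → ℝ)
    (hβ : ∀ i, 0 < β i) (hc : ∀ i, 1 < c i)
    (x y : Fin n → ℝ)
    (hx : ∀ i, 0 < x i ∧ x i ≤ 1 / c i)
    (hy : ∀ i, 0 < y i ∧ y i ≤ 1 / c i)
    (hxeq : ∀ i, β i * (1 - c i * x i) * (1 - x i) * (∑ j, A i j * x j) = γ i * x i)
    (hyeq : ∀ i, β i * (1 - c i * y i) * (1 - y i) * (∑ j, A i j * y j) = γ i * y i) :
    ∀ i, y i ≤ x i := by
  by_contra h
  push_neg at h
  obtain ⟨k, hk⟩ := h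
  have hx0 : ∀ i, 0 < x i := fun i => (hx i).1
  have hy0 : ∀ i, 0 < y i := fun i => (hy i).1
  have hc0 : ∀ i, 0 < c i := fun i => lt_trans one_pos (hc i)
  obtain ⟨i₀, -, hi₀⟩ := Finset.exists_max_image Finset.univ (fun i => y i / x i)
    ⟨k, Finset.mem_univ k⟩
  set m := y i₀ / x i₀ with hm
  have hm1 : 1 < m := by
    have h1 : 1 < y k / x k := (one_lt_div (hx0 k)).2 hk
    exact lt_of_lt_of_le h1 (hi₀ k (Finset.mem_univ k))
  have hyle : ∀ j, y j ≤ m * x j := by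
    intro j
    have := hi₀ j (Finset.mem_univ j)
    exact (div_le_iff₀ (hx0 j)).1 this
  have hyi0 : y i₀ = m * x i₀ := by
    rw [hm, div_mul_cancel₀ _ (ne_of_gt (hx0 i₀))]
  -- positivity of the sum at i₀
  have hSx : 0 < ∑ j, A i₀ j * x j := by
    obtain ⟨a, ha⟩ := Fintype.exists_ne_of_one_lt_card (by simp; omega) i₀
    obtain ⟨i', hi', j, hj, hAij⟩ := hirr {i₀} ⟨i₀, rfl⟩ (by
      intro hcontra
      have : a ∈ ({i₀} : Set (Fin n)) := hcontra ▸ Set.mem_univ a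
      exact ha this)
    have hi'eq : i' = i₀ := hi'
    subst hi'eq
    refine Finset.sum_pos' (fun j _ => mul_nonneg (hA i' j) (le_of_lt (hx0 j))) ?_
    exact ⟨j, Finset.mem_univ j, mul_pos hAij (hx0 j)⟩
  -- basic bounds at i₀
  have hxlt : x i₀ < y i₀ := by
    rw [hyi0]; nlinarith [hx0 i₀]
  have hy1 : 0 ≤ 1 - c i₀ * y i₀ := by
    have := (hy i₀).2
    rw [le_div_iff₀ (hc0 i₀)] at this
    linarith
  have hx1 : 0 ≤ 1 - c i₀ * x i₀ := by
    have := (hx i₀).2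
    rw [le_div_iff₀ (hc0 i₀)] at this
    linarith
  have hy2 : 0 < 1 - y i₀ := by
    have h1 : y i₀ ≤ 1 / c i₀ := (hy i₀).2
    have h2 : 1 / c i₀ < 1 := by
      rw [div_lt_one (hc0 i₀)]; exact hc i₀
    linarith
  have hx2 : 0 < 1 - x i₀ := by
    have h1 : x i₀ ≤ 1 / c i₀ := (hx i₀).2
    have h2 : 1 / c i₀ < 1 := by
      rw [div_lt_one (hc0 i₀)]; exact hc i₀
    linarith
  have hPlt : (1 - c i₀ * y i₀) * (1 - y i₀) < (1 - c i₀ * x i₀) * (1 - x i₀) := by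
    have hcy : 1 - c i₀ * y i₀ < 1 - c i₀ * x i₀ := by
      have := mul_lt_mul_of_pos_left hxlt (hc0 i₀)
      linarith
    nlinarith
  have hSle : (∑ j, A i₀ j * y j) ≤ m * ∑ j, A i₀ j * x j := by
    have h1 : (∑ j, A i₀ j * y j) ≤ ∑ j, A i₀ j * (m * x j) :=
      Finset.sum_le_sum fun j _ => mul_le_mul_of_nonneg_left (hyle j) (hA i₀ j)
    have h2 : (∑ j, A i₀ j * (m * x j)) = m * ∑ j, A i₀ j * x j := by
      rw [Finset.mul_sum]
      exact Finset.sum_congr rfl fun j _ => by ring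
    linarith
  have hSy0 : 0 ≤ ∑ j, A i₀ j * y j :=
    Finset.sum_nonneg fun j _ => mul_nonneg (hA i₀ j) (le_of_lt (hy0 j))
  have hchain : γ i₀ * y i₀ < γ i₀ * y i₀ := by
    calc γ i₀ * y i₀
        = β i₀ * (1 - c i₀ * y i₀) * (1 - y i₀) * (∑ j, A i₀ j * y j) := (hyeq i₀).symm
      _ ≤ β i₀ * (1 - c i₀ * y i₀) * (1 - y i₀) * (m * ∑ j, A i₀ j * x j) := by
          apply mul_le_mul_of_nonneg_left hSle
          have := hβ i₀
          positivity
      _ < β i₀ * (1 - c i₀ * x i₀) * (1 - x i₀) * (m * ∑ j, A i₀ j * x j) := by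
          have hpos : 0 < m * ∑ j, A i₀ j * x j := mul_pos (by linarith) hSx
          nlinarith [mul_lt_mul_of_pos_right (mul_lt_mul_of_pos_left hPlt (hβ i₀)) hpos]
      _ = m * (γ i₀ * x i₀) := by rw [← hxeq i₀]; ring
      _ = γ i₀ * y i₀ := by rw [hyi0]; ring
  exact lt_irrefl _ hchain

theorem stmt15 {n : ℕ} (hn : 2 ≤ n) (A : Matrix (Fin n) (Fin n) ℝ)
    (hA : ∀ i j, 0 ≤ A i j) (hirr : MatIrreducible A)
    (β γ c : Fin n → ℝ)
    (hβ : ∀ i, 0 < β i) (hγ : ∀ i, 0 ≤ γ i) (hc : ∀ i, 1 < c i)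
    (x y : Fin n → ℝ)
    (hx : ∀ i, 0 < x i ∧ x i ≤ 1 / c i)
    (hy : ∀ i, 0 < y i ∧ y i ≤ 1 / c i)
    (hxeq : ∀ i, β i * (1 - c i * x i) * (1 - x i) * (∑ j, A i j * x j) = γ i * x i)
    (hyeq : ∀ i, β i * (1 - c i * y i) * (1 - y i) * (∑ j, A i j * y j) = γ i * y i) :
    x = y := by
  have h1 := stmt15_aux hn A hA hirr β γ c hβ hc x y hx hy hxeq hyeq
  have h2 := stmt15_aux hn A hA hirr β γ c hβ hc y x hy hx hyeq hxeq
  funext i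
  exact le_antisymm (h2 i) (h1 i)
end

section
/- Pointwise Lyapunov decrease toward the endemic equilibrium: Assume A is irreducible and c_i ≥ 2 for all i. Let x̄ ∈ ℝⁿ satisfy 0 < x̄_i ≤ 1/c_i and F_i(x̄) = 0 for all i. Let x ∈ ℝⁿ satisfy 0 < x_i ≤ 1/c_i for all i and x ≠ x̄, and let m be any index at which |x_i − x̄_i|/x̄_i attains its maximum over i ∈ {1,…,n}. Then sgn(x_m − x̄_m) · F_m(x) < 0, where sgn denotes the sign function. -/
open Matrix

set_option maxHeartbeats 1000000

theorem stmt16 {n : ℕ} (hn : 2 ≤ n) (A : Matrix (Fin n) (Fin n) ℝ)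
    (hA : ∀ i j, 0 ≤ A i j) (hirr : MatIrreducible A)
    (β γ c : Fin n → ℝ)
    (hβ : ∀ i, 0 < β i) (hγ : ∀ i, 0 ≤ γ i) (hc : ∀ i, 1 < c i)
    (hc2 : ∀ i, 2 ≤ c i)
    (xbar : Fin n → ℝ) (hxbar : ∀ i, 0 < xbar i ∧ xbar i ≤ 1 / c i)
    (heq : ∀ i, sisF A β γ c xbar i = 0)
    (x : Fin n → ℝ) (hx : ∀ i, 0 < x i ∧ x i ≤ 1 / c i) (hxne : x ≠ xbar)
    (m : Fin n) (hm : ∀ i, |x i - xbar i| / xbar i ≤ |x m - xbar m| / xbar m) :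
    Real.sign (x m - xbar m) * sisF A β γ c x m < 0 := by
  have hcm0 : 0 < c m := lt_trans one_pos (hc m)
  have hxb := hxbar m
  have hxm := hx m
  have hbub : xbar m ≤ 1 / c m := hxb.2
  have hxub : x m ≤ 1 / c m := hxm.2
  have hbub' : c m * xbar m ≤ 1 := by
    rw [le_div_iff₀ hcm0] at hbub; linarith
  have hxub' : c m * x m ≤ 1 := by
    rw [le_div_iff₀ hcm0] at hxub; linarith
  -- Sbar positive
  have hSbarpos : 0 < ∑ j, A m j * xbar j := by
    have hnt : ({m} : Set (Fin n)) ≠ Set.univ := by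
      have : Nontrivial (Fin n) := by
        have h1 : 1 < Fintype.card (Fin n) := by simp; omega
        exact Fintype.one_lt_card_iff_nontrivial.mp h1
      obtain ⟨j, hj⟩ := exists_ne m
      intro h
      have : j ∈ ({m} : Set (Fin n)) := by rw [h]; trivial
      exact hj this
    obtain ⟨i, hi, j, hj, hAij⟩ := hirr {m} ⟨m, rfl⟩ hnt
    have him : i = m := hi
    subst him
    have h1 : A i j * xbar j ≤ ∑ k, A i k * xbar k :=
      Finset.single_le_sum (fun k _ => mul_nonneg (hA i k) (hxbar k).1.le)
        (Finset.mem_univ j)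
    have := mul_pos hAij (hxbar j).1
    linarith
  set Sbar := ∑ j, A m j * xbar j with hSbardef
  have heqm : β m * (1 - c m * xbar m) * (1 - xbar m) * Sbar - γ m * xbar m = 0 := heq m
  have heq2 : γ m * xbar m = β m * (1 - c m * xbar m) * (1 - xbar m) * Sbar := by linarith
  have hne : x m ≠ xbar m := by
    intro h
    apply hxne
    funext i
    have hi := hm i
    rw [h, sub_self, abs_zero, zero_div] at hi
    have hnn : 0 ≤ |x i - xbar i| / xbar i := div_nonneg (abs_nonneg _) (hxbar i).1.le
    have h0 : |x i - xbar i| / xbar i = 0 := le_antisymm hi hnn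
    rcases div_eq_zero_iff.mp h0 with h1 | h1
    · have := abs_eq_zero.mp h1; linarith
    · exact absurd h1 (ne_of_gt (hxbar i).1)
  have hratio : ∀ j, |x j - xbar j| * xbar m ≤ |x m - xbar m| * xbar j := by
    intro j
    have hj := hm j
    rw [div_le_div_iff₀ (hxbar j).1 (hxbar m).1] at hj
    exact hj
  -- strict decrease of g(t) = (1-ct)(1-t) on (0, 1/c]
  have hgmono : ∀ a b : ℝ, 0 < a → a ≤ 1 / c m → 0 < b → b ≤ 1 / c m → a < b →
      (1 - c m * b) * (1 - b) < (1 - c m * a) * (1 - a) := by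
    intro a b ha hau hb hbu hab
    have hau' : c m * a ≤ 1 := by rw [le_div_iff₀ hcm0] at hau; linarith
    have hbu' : c m * b ≤ 1 := by rw [le_div_iff₀ hcm0] at hbu; linarith
    have h2 : 2 ≤ c m := hc2 m
    have hfac : 0 < c m + 1 - c m * a - c m * b := by linarith
    nlinarith [mul_pos (sub_pos.mpr hab) hfac]
  have hkpos : 0 < x m / xbar m := div_pos hxm.1 hxb.1
  have hk : γ m * x m = (x m / xbar m) * (γ m * xbar m) := by
    rw [eq_comm, div_mul_eq_mul_div, div_eq_iff (ne_of_gt hxb.1)]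
    ring
  rcases lt_or_gt_of_ne hne with hlt | hgt
  · -- x m < xbar m : F m x > 0, sign = -1
    have habs : |x m - xbar m| = xbar m - x m := by
      rw [abs_of_neg (by linarith)]; ring
    have hSlb : (x m / xbar m) * Sbar ≤ ∑ j, A m j * x j := by
      rw [hSbardef, Finset.mul_sum]
      apply Finset.sum_le_sum
      intro j _
      have hr := hratio j
      rw [habs] at hr
      have hb : (x m / xbar m) * xbar j ≤ x j := by
        rw [div_mul_eq_mul_div, div_le_iff₀ (hxbar m).1]
        have h3 : xbar j - x j ≤ |x j - xbar j| := by
          have := neg_abs_le (x j - xbar j); linarith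
        nlinarith [(hxbar j).1]
      have h2 := mul_le_mul_of_nonneg_left hb (hA m j)
      have h4 : A m j * ((x m / xbar m) * xbar j) = x m / xbar m * (A m j * xbar j) := by
        ring
      linarith
    have hg1 : 0 < 1 - c m * x m := by
      nlinarith [mul_lt_mul_of_pos_left hlt hcm0]
    have hg2 : 0 < 1 - x m := by
      nlinarith [mul_nonneg (by linarith [hc2 m] : (0:ℝ) ≤ c m - 2) hxm.1.le]
    have hgpos : 0 < (1 - c m * x m) * (1 - x m) := mul_pos hg1 hg2
    have hgstr : (1 - c m * xbar m) * (1 - xbar m) < (1 - c m * x m) * (1 - x m) :=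
      hgmono (x m) (xbar m) hxm.1 hxub hxb.1 hbub hlt
    have hFpos : 0 < sisF A β γ c x m := by
      unfold sisF
      have h1 : β m * (1 - c m * x m) * (1 - x m) * ((x m / xbar m) * Sbar)
          ≤ β m * (1 - c m * x m) * (1 - x m) * (∑ j, A m j * x j) := by
        apply mul_le_mul_of_nonneg_left hSlb
        nlinarith [mul_nonneg (hβ m).le hgpos.le]
      have hkey : 0 < β m * (1 - c m * x m) * (1 - x m) * ((x m / xbar m) * Sbar)
          - γ m * x m := by
        rw [hk, heq2]
        nlinarith [mul_pos (mul_pos hkpos hSbarpos)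
          (mul_pos (hβ m) (sub_pos.mpr hgstr))]
      linarith
    rw [Real.sign_of_neg (by linarith : x m - xbar m < 0)]
    linarith
  · -- x m > xbar m : F m x < 0, sign = 1
    have habs : |x m - xbar m| = x m - xbar m := abs_of_pos (by linarith)
    have hSub : (∑ j, A m j * x j) ≤ (x m / xbar m) * Sbar := by
      rw [hSbardef, Finset.mul_sum]
      apply Finset.sum_le_sum
      intro j _
      have hr := hratio j
      rw [habs] at hr
      have hb : x j ≤ (x m / xbar m) * xbar j := by
        rw [div_mul_eq_mul_div, le_div_iff₀ (hxbar m).1]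
        have h3 : x j - xbar j ≤ |x j - xbar j| := le_abs_self _
        nlinarith [(hxbar j).1]
      have h2 := mul_le_mul_of_nonneg_left hb (hA m j)
      have h4 : A m j * ((x m / xbar m) * xbar j) = x m / xbar m * (A m j * xbar j) := by
        ring
      linarith
    have hg1 : 0 ≤ 1 - c m * x m := by linarith
    have hg2 : 0 ≤ 1 - x m := by
      nlinarith [mul_nonneg (by linarith [hc2 m] : (0:ℝ) ≤ c m - 2) hxm.1.le]
    have hgnn : 0 ≤ (1 - c m * x m) * (1 - x m) := mul_nonneg hg1 hg2
    have hgstr : (1 - c m * x m) * (1 - x m) < (1 - c m * xbar m) * (1 - xbar m) :=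
      hgmono (xbar m) (x m) hxb.1 hbub hxm.1 hxub hgt
    have hFneg : sisF A β γ c x m < 0 := by
      unfold sisF
      have h1 : β m * (1 - c m * x m) * (1 - x m) * (∑ j, A m j * x j)
          ≤ β m * (1 - c m * x m) * (1 - x m) * ((x m / xbar m) * Sbar) := by
        apply mul_le_mul_of_nonneg_left hSub
        have := (hβ m).le
        nlinarith
      have hkey : β m * (1 - c m * x m) * (1 - x m) * ((x m / xbar m) * Sbar)
          - γ m * x m < 0 := by
        rw [hk, heq2]
        nlinarith [mul_pos (mul_pos hkpos hSbarpos)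
          (mul_pos (hβ m) (sub_pos.mpr hgstr))]
      linarith
    rw [Real.sign_of_pos (by linarith : 0 < x m - xbar m)]
    linarith
end

section
/- No finite-time extinction in the endemic regime: Assume A is irreducible, s(BA − Γ) > 0, and c_i ≥ 2 for all i. Let x : [0,∞) → ℝⁿ be a solution of the controlled SIS system with 0 < x_i(0) ≤ 1/c_i for all i. Then 0 < x_i(t) ≤ 1/c_i for every i ∈ {1,…,n} and every t ≥ 0; in particular, no component of the solution ever reaches zero. -/
open Matrix Filter Topology

/-!
Write `y_i = 1 - c_i x_i`. Along a solution, `(x_i e^{γ_i t})' = β_i y_i (1 - x_i) ∑_j A_ij x_j e^{γ_i t}`,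
which is nonnegative while `x` stays in the box `∏ [0, 1/c_i]`, so `x_i(t) ≥ x_i(0) e^{-γ_i t} > 0` there.
Conversely, as long as `0 < x < 1`, `y_i' = -c_i β_i (1 - x_i) (∑_j A_ij x_j) y_i + c_i γ_i x_i` is
nonnegative wherever `y_i < 0`, so `y_i` cannot become negative. Real induction on the closed condition
`x_i(0) ≤ x_i(t) e^{γ_i t} ∧ x_i(t) ≤ 1/c_i` combines the two.
-/

open Set

lemma nonneg_of_deriv_nonneg_of_neg {f f' : ℝ → ℝ} {a b : ℝ} (hf : ContinuousOn f (Icc a b))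
    (hf' : ∀ t ∈ Ioo a b, HasDerivAt f (f' t) t) (ha : 0 ≤ f a)
    (hneg : ∀ t ∈ Ioo a b, f t < 0 → 0 ≤ f' t) : ∀ t ∈ Icc a b, 0 ≤ f t := by
  intro t₁ ht₁
  by_contra! hft₁
  have hsub : Icc a t₁ ⊆ Icc a b := Icc_subset_Icc_right ht₁.2
  have hclosed : IsClosed {t ∈ Icc a t₁ | 0 ≤ f t} :=
    isClosed_Icc.isClosed_le continuousOn_const (hf.mono hsub)
  obtain ⟨σ, ⟨⟨haσ, hσt₁⟩, hfσ⟩, hσmax⟩ :=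
    (isCompact_Icc.of_isClosed_subset hclosed (sep_subset _ _)).exists_isGreatest
      ⟨a, ⟨le_rfl, ht₁.1⟩, ha⟩
  have hneg_after : ∀ t ∈ Ioc σ t₁, f t < 0 := fun t ht =>
    not_le.1 fun h => ht.1.not_ge (hσmax ⟨⟨haσ.trans ht.1.le, ht.2⟩, h⟩)
  have hIoo : ∀ t ∈ Ioo σ t₁, t ∈ Ioo a b := fun t ht =>
    ⟨haσ.trans_lt ht.1, ht.2.trans_le ht₁.2⟩
  have hmono : MonotoneOn f (Icc σ t₁) := by
    refine monotoneOn_of_hasDerivWithinAt_nonneg (convex_Icc σ t₁) (f' := f')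
      (hf.mono ((Icc_subset_Icc_left haσ).trans hsub)) ?_ ?_ <;> rw [interior_Icc]
    · exact fun t ht => (hf' t (hIoo t ht)).hasDerivWithinAt
    · exact fun t ht => hneg t (hIoo t ht) (hneg_after t ⟨ht.1, ht.2.le⟩)
  linarith [hmono ⟨le_rfl, hσt₁⟩ ⟨hσt₁, le_rfl⟩ hσt₁]

section VectorField

variable {n : ℕ} {A : Matrix (Fin n) (Fin n) ℝ} {β γ c x : Fin n → ℝ} {i : Fin n}

lemma sisF_add_mul_eq (A : Matrix (Fin n) (Fin n) ℝ) (β γ c x : Fin n → ℝ) (i : Fin n) :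
    sisF A β γ c x i + γ i * x i = β i * (1 - c i * x i) * (1 - x i) * ∑ j, A i j * x j := by
  simp only [sisF, sub_add_cancel]

lemma sisF_add_mul_nonneg (hA : ∀ j, 0 ≤ A i j) (hβ : 0 ≤ β i) (hc : 1 ≤ c i)
    (hx : ∀ j, 0 ≤ x j) (hxi : x i ≤ 1 / c i) : 0 ≤ sisF A β γ c x i + γ i * x i := by
  have hcx : c i * x i ≤ 1 := by rwa [le_div_iff₀ (by linarith), mul_comm] at hxi
  have hx1 : x i ≤ 1 := by nlinarith [hx i]
  rw [sisF_add_mul_eq]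
  exact mul_nonneg (mul_nonneg (mul_nonneg hβ (by linarith)) (by linarith))
    (Finset.sum_nonneg fun j _ => mul_nonneg (hA j) (hx j))

lemma sisF_nonpos_of_one_lt_mul (hA : ∀ j, 0 ≤ A i j) (hβ : 0 ≤ β i) (hγ : 0 ≤ γ i)
    (hx : ∀ j, 0 ≤ x j) (hx1 : x i ≤ 1) (hcx : 1 < c i * x i) : sisF A β γ c x i ≤ 0 := by
  have hsum : 0 ≤ ∑ j, A i j * x j := Finset.sum_nonneg fun j _ => mul_nonneg (hA j) (hx j)
  have hprod : β i * (1 - c i * x i) * (1 - x i) ≤ 0 :=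
    mul_nonpos_of_nonpos_of_nonneg
      (mul_nonpos_of_nonneg_of_nonpos hβ (by linarith)) (by linarith)
  have := mul_nonpos_of_nonpos_of_nonneg hprod hsum
  have := mul_nonneg hγ (hx i)
  simp only [sisF]
  linarith

end VectorField

namespace IsSol

variable {n : ℕ} {A : Matrix (Fin n) (Fin n) ℝ} {β γ c : Fin n → ℝ} {x : ℝ → Fin n → ℝ}
  {a b t : ℝ} {i : Fin n}

lemma continuousOn (hx : IsSol A β γ c x) : ContinuousOn x (Ici 0) :=
  fun t ht => (hx t ht).continuousWithinAt

lemma continuousOn_apply (hx : IsSol A β γ c x) (i : Fin n) :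
    ContinuousOn (fun s => x s i) (Ici 0) :=
  (continuous_apply i).comp_continuousOn hx.continuousOn

lemma hasDerivAt_apply (hx : IsSol A β γ c x) (ht : 0 < t) (i : Fin n) :
    HasDerivAt (fun s => x s i) (sisF A β γ c (x t) i) t :=
  ((hasDerivWithinAt_pi.1 (hx t ht.le)) i).hasDerivAt (Ici_mem_nhds ht)

lemma monotoneOn_mul_exp (hx : IsSol A β γ c x) (hA : ∀ j, 0 ≤ A i j) (hβ : 0 ≤ β i)
    (hc : 1 ≤ c i) (ha : 0 ≤ a) (hbox : ∀ t ∈ Ioo a b, (∀ j, 0 ≤ x t j) ∧ x t i ≤ 1 / c i) :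
    MonotoneOn (fun t => x t i * Real.exp (γ i * t)) (Icc a b) := by
  have hsub : Icc a b ⊆ Ici 0 := fun t ht => ha.trans ht.1
  refine monotoneOn_of_hasDerivWithinAt_nonneg (convex_Icc a b)
    (((hx.continuousOn_apply i).mono hsub).mul (by fun_prop))
    (f' := fun t => (sisF A β γ c (x t) i + γ i * x t i) * Real.exp (γ i * t)) ?_ ?_
    <;> rw [interior_Icc] <;> intro t ht
  · have hexp : HasDerivAt (fun s => Real.exp (γ i * s)) (Real.exp (γ i * t) * γ i) t := by
      simpa using ((hasDerivAt_id t).const_mul (γ i)).exp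
    exact (((hx.hasDerivAt_apply (ha.trans_lt ht.1) i).fun_mul hexp).congr_deriv
      (by ring)).hasDerivWithinAt
  · exact mul_nonneg (sisF_add_mul_nonneg hA hβ hc (hbox t ht).1 (hbox t ht).2)
      (Real.exp_pos _).le

lemma le_one_div_on_Icc (hx : IsSol A β γ c x) (hA : ∀ j, 0 ≤ A i j) (hβ : 0 ≤ β i)
    (hγ : 0 ≤ γ i) (hc : 0 < c i) (ha : 0 ≤ a) (hxa : x a i ≤ 1 / c i)
    (hbox : ∀ t ∈ Ioo a b, (∀ j, 0 ≤ x t j) ∧ x t i ≤ 1) :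
    ∀ t ∈ Icc a b, x t i ≤ 1 / c i := by
  have hgap : ∀ s, x s i ≤ 1 / c i ↔ 0 ≤ 1 - c i * x s i := fun s => by
    rw [le_div_iff₀ hc, sub_nonneg, mul_comm]
  intro t ht
  refine (hgap t).2 (nonneg_of_deriv_nonneg_of_neg (f := fun s => 1 - c i * x s i)
    (f' := fun s => -(c i * sisF A β γ c (x s) i))
    (continuousOn_const.sub (continuousOn_const.mul
      ((hx.continuousOn_apply i).mono fun s hs => ha.trans hs.1)))
    (fun s hs => ((hx.hasDerivAt_apply (ha.trans_lt hs.1) i).const_mul (c i)).const_sub 1)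
    ((hgap a).1 hxa) (fun s hs (hneg : 1 - c i * x s i < 0) => ?_) t ht)
  exact neg_nonneg.2 (mul_nonpos_of_nonneg_of_nonpos hc.le
    (sisF_nonpos_of_one_lt_mul hA hβ hγ (hbox s hs).1 (hbox s hs).2 (by linarith)))

lemma exists_bounds_on_Icc (hx : IsSol A β γ c x) (hA : ∀ i j, 0 ≤ A i j) (hβ : ∀ i, 0 < β i)
    (hγ : ∀ i, 0 ≤ γ i) (hc : ∀ i, 1 < c i) (ht : 0 ≤ t) (hpos : ∀ i, 0 < x t i)
    (hle : ∀ i, x t i ≤ 1 / c i) :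
    ∃ u, t < u ∧ ∀ r ∈ Icc t u, ∀ i,
      x t i * Real.exp (γ i * t) ≤ x r i * Real.exp (γ i * r) ∧ x r i ≤ 1 / c i := by
  have hlt1 : ∀ i, x t i < 1 := fun i =>
    (hle i).trans_lt ((div_lt_one (by linarith [hc i])).2 (hc i))
  have hev : ∀ᶠ r in 𝓝[≥] t, ∀ j, x r j ∈ Ioo 0 1 := by
    refine eventually_all.2 fun j => ?_
    exact (((hx.continuousOn_apply j) t ht).mono (Ici_subset_Ici.2 ht)).eventually
      (Ioo_mem_nhds (hpos j) (hlt1 j))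
  obtain ⟨u, htu, hsub⟩ := mem_nhdsGE_iff_exists_Icc_subset.1 hev
  have hIoo : ∀ r ∈ Ioo t u, ∀ j, x r j ∈ Ioo 0 1 := fun r hr => hsub (Ioo_subset_Icc_self hr)
  have hup : ∀ i, ∀ r ∈ Icc t u, x r i ≤ 1 / c i := fun i =>
    hx.le_one_div_on_Icc (hA i) (hβ i).le (hγ i) (by linarith [hc i]) ht (hle i)
      fun r hr => ⟨fun j => (hIoo r hr j).1.le, (hIoo r hr i).2.le⟩
  refine ⟨u, htu, fun r hr i => ⟨?_, hup i r hr⟩⟩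
  exact hx.monotoneOn_mul_exp (hA i) (hβ i).le (hc i).le ht
    (fun s hs => ⟨fun j => (hIoo s hs j).1.le, hup i s (Ioo_subset_Icc_self hs)⟩)
    ⟨le_rfl, htu.le⟩ hr hr.1

lemma le_mul_exp_and_le_one_div (hx : IsSol A β γ c x) (hA : ∀ i j, 0 ≤ A i j) (hβ : ∀ i, 0 < β i)
    (hγ : ∀ i, 0 ≤ γ i) (hc : ∀ i, 1 < c i) (h0 : ∀ i, x 0 i ∈ Ioc 0 (1 / c i))
    (ht : 0 ≤ t) (i : Fin n) :
    x 0 i ≤ x t i * Real.exp (γ i * t) ∧ x t i ≤ 1 / c i := by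
  set s := {r | x 0 ≤ fun i => x r i * Real.exp (γ i * r)} ∩ {r | x r ≤ fun i => 1 / c i}
  suffices Icc 0 t ⊆ s from
    ⟨this ⟨ht, le_rfl⟩ |>.1 i, this ⟨ht, le_rfl⟩ |>.2 i⟩
  have hcont : ContinuousOn (fun r => fun i => x r i * Real.exp (γ i * r)) (Ici 0) :=
    continuousOn_pi.2 fun i => (hx.continuousOn_apply i).mul (by fun_prop)
  refine IsClosed.Icc_subset_of_forall_mem_nhdsWithin ?_ ?_ ?_
  · have hcl := ((isClosed_Icc (a := 0) (b := t)).isClosed_le (continuousOn_const (c := x 0))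
      (hcont.mono Icc_subset_Ici_self)).inter
      ((isClosed_Icc (a := 0) (b := t)).isClosed_le (hx.continuousOn.mono Icc_subset_Ici_self)
      (continuousOn_const (c := fun i => 1 / c i)))
    convert hcl using 1
    ext r
    simp only [s, mem_inter_iff, mem_ofPred_eq]
    tauto
  · exact ⟨fun i => by simp, fun i => (h0 i).2⟩
  · rintro r ⟨⟨hlow, hup⟩, hr, -⟩
    have hpos : ∀ i, 0 < x r i := fun i =>
      pos_of_mul_pos_left ((h0 i).1.trans_le (hlow i)) (Real.exp_pos _).le
    obtain ⟨u, hru, hbounds⟩ := hx.exists_bounds_on_Icc hA hβ hγ hc hr hpos hup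
    refine mem_nhdsGT_iff_exists_Ioc_subset.2 ⟨u, hru, fun q hq => ?_⟩
    exact ⟨fun i => (hlow i).trans (hbounds q (Ioc_subset_Icc_self hq) i).1,
      fun i => (hbounds q (Ioc_subset_Icc_self hq) i).2⟩

end IsSol

theorem stmt17_general {n : ℕ} (A : Matrix (Fin n) (Fin n) ℝ)
    (hA : ∀ i j, 0 ≤ A i j)
    (β γ c : Fin n → ℝ)
    (hβ : ∀ i, 0 < β i) (hγ : ∀ i, 0 ≤ γ i) (hc : ∀ i, 1 < c i)
    (x : ℝ → Fin n → ℝ) (hx : IsSol A β γ c x)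
    (h0 : ∀ i, x 0 i ∈ Set.Ioc 0 (1 / c i)) :
    ∀ t : ℝ, 0 ≤ t → ∀ i, x t i ∈ Set.Ioc 0 (1 / c i) := by
  intro t ht i
  obtain ⟨hlow, hup⟩ := hx.le_mul_exp_and_le_one_div hA hβ hγ hc h0 ht i
  exact ⟨pos_of_mul_pos_left ((h0 i).1.trans_le hlow) (Real.exp_pos _).le, hup⟩

theorem stmt17 {n : ℕ} (hn : 2 ≤ n) (A : Matrix (Fin n) (Fin n) ℝ)
    (hA : ∀ i j, 0 ≤ A i j) (hirr : MatIrreducible A)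
    (β γ c : Fin n → ℝ)
    (hβ : ∀ i, 0 < β i) (hγ : ∀ i, 0 ≤ γ i) (hc : ∀ i, 1 < c i)
    (hs : 0 < specAbs (Matrix.diagonal β * A - Matrix.diagonal γ))
    (hc2 : ∀ i, 2 ≤ c i)
    (x : ℝ → Fin n → ℝ) (hx : IsSol A β γ c x)
    (h0 : ∀ i, x 0 i ∈ Set.Ioc 0 (1 / c i)) :
    ∀ t : ℝ, 0 ≤ t → ∀ i, x t i ∈ Set.Ioc 0 (1 / c i) :=
  stmt17_general A hA β γ c hβ hγ hc x hx h0
end
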